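/- arXiv:1307.6628 — 9 statements merged into one kernel-verified Lean document; each statement's English description precedes it below -/
import Mathlib

section
/- Fix a convex free space F ⊆ ℝ². Let u, u', v, v' ∈ ℝ² with the y-coordinate of u and u' equal to i, the y-coordinate of v and v' equal to j, i < j, u.x ≤ u'.x, and v'.x ≤ v.x. If there is a continuous curve from u to v lying in F that is monotone non-decreasing in both coordinates, and likewise a monotone feasible curve from u' to v', then there exist monotone feasible curves in F from u to v' and from u' to v. -/
open Set

/-- A plane curve is monotone if it is non-decreasing in both coordinates. -/
def MonotoneCurve (γ : ℝ → ℝ × ℝ) : Prop :=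
  MonotoneOn (fun t => (γ t).1) (Icc 0 1) ∧ MonotoneOn (fun t => (γ t).2) (Icc 0 1)

/-- `u ↝ v`: there is a continuous monotone curve from `u` to `v` lying in the free space `F`. -/
def MonFeasible (F : Set (ℝ × ℝ)) (u v : ℝ × ℝ) : Prop :=
  ∃ γ : ℝ → ℝ × ℝ, ContinuousOn γ (Icc 0 1) ∧ γ 0 = u ∧ γ 1 = v ∧
    (∀ t ∈ Icc (0:ℝ) 1, γ t ∈ F) ∧ MonotoneCurve γ

/-- In a convex free space, the straight segment between two feasible points
ordered in both coordinates is a monotone feasible curve. -/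
lemma segment_monFeasible (F : Set (ℝ × ℝ)) (hF : Convex ℝ F) (a b : ℝ × ℝ)
    (ha : a ∈ F) (hb : b ∈ F) (hx : a.1 ≤ b.1) (hy : a.2 ≤ b.2) :
    MonFeasible F a b := by
  refine ⟨fun t => (1 - t) • a + t • b, ?_, by simp, by simp, ?_, ?_, ?_⟩
  · exact (Continuous.continuousOn (by continuity))
  · intro t ht
    exact hF ha hb (by linarith [ht.2]) ht.1 (by ring)
  · intro s hs t ht hst
    simp only [Prod.smul_fst, Prod.fst_add, smul_eq_mul]
    nlinarith
  · intro s hs t ht hst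
    simp only [Prod.smul_snd, Prod.snd_add, smul_eq_mul]
    nlinarith

/-- Crossing Lemma: if `u,u'` lie on the line `y = i`, `v,v'` on `y = j`
with `i < j`, `u.x ≤ u'.x`, `v'.x ≤ v.x`, and there are monotone feasible curves
`u ↝ v` and `u' ↝ v'` in the convex free space `F`, then there are monotone feasible
curves `u ↝ v'` and `u' ↝ v`. -/
theorem crossing_lemma (F : Set (ℝ × ℝ)) (hF : Convex ℝ F)
    (i j : ℝ) (hij : i < j) (u u' v v' : ℝ × ℝ)
    (hu : u.2 = i) (hu' : u'.2 = i) (hv : v.2 = j) (hv' : v'.2 = j)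
    (hux : u.1 ≤ u'.1) (hvx : v'.1 ≤ v.1)
    (h1 : MonFeasible F u v) (h2 : MonFeasible F u' v') :
    MonFeasible F u v' ∧ MonFeasible F u' v := by
  obtain ⟨γ, hγc, hγ0, hγ1, hγF, hγm⟩ := h1
  obtain ⟨δ, hδc, hδ0, hδ1, hδF, hδm⟩ := h2
  have huF : u ∈ F := hγ0 ▸ hγF 0 (by norm_num)
  have hvF : v ∈ F := hγ1 ▸ hγF 1 (by norm_num)
  have hu'F : u' ∈ F := hδ0 ▸ hδF 0 (by norm_num)
  have hv'F : v' ∈ F := hδ1 ▸ hδF 1 (by norm_num)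
  have hδx : u'.1 ≤ v'.1 := by
    have := hδm.1 (by norm_num : (0:ℝ) ∈ Icc (0:ℝ) 1) (by norm_num : (1:ℝ) ∈ Icc (0:ℝ) 1)
      (by norm_num)
    simpa [hδ0, hδ1] using this
  constructor
  · exact segment_monFeasible F hF u v' huF hv'F (le_trans hux hδx)
      (by rw [hu, hv']; exact hij.le)
  · exact segment_monFeasible F hF u' v hu'F hvF (le_trans hδx hvx)
      (by rw [hu', hv]; exact hij.le)
end

section
/- In the free space diagram of two polygonal curves, the free space within any single cell is convex: for a segment P_i parametrized affinely on [0,1] and a segment Q_j parametrized affinely on [0,1], the set {(s,t) ∈ [0,1]² : ‖P_i(s) - Q_j(t)‖ ≤ ε} is convex. -/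
open Set

/-- the free space inside a single cell of the free-space diagram is convex.
Here `P_i(s) = (1-s)•p₁ + s•p₂` and `Q_j(t) = (1-t)•q₁ + t•q₂` parametrize two segments. -/
theorem cell_free_space_convex {d : ℕ} (p₁ p₂ q₁ q₂ : EuclideanSpace ℝ (Fin d)) (ε : ℝ)
    (hε : 0 ≤ ε) :
    Convex ℝ {st : ℝ × ℝ | st.1 ∈ Icc (0:ℝ) 1 ∧ st.2 ∈ Icc (0:ℝ) 1 ∧
      ‖((1 - st.1) • p₁ + st.1 • p₂) - ((1 - st.2) • q₁ + st.2 • q₂)‖ ≤ ε} := by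
  rintro ⟨s₁, t₁⟩ ⟨hs₁, ht₁, h₁⟩ ⟨s₂, t₂⟩ ⟨hs₂, ht₂, h₂⟩ a b ha hb hab
  have hb' : b = 1 - a := by linarith
  subst hb'
  refine ⟨(convex_Icc 0 1) hs₁ hs₂ ha hb hab, (convex_Icc 0 1) ht₁ ht₂ ha hb hab, ?_⟩
  simp only [Prod.smul_mk, Prod.mk_add_mk, smul_eq_mul]
  have key : ((1 - (a * s₁ + (1 - a) * s₂)) • p₁ + (a * s₁ + (1 - a) * s₂) • p₂)
        - ((1 - (a * t₁ + (1 - a) * t₂)) • q₁ + (a * t₁ + (1 - a) * t₂) • q₂)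
      = a • (((1 - s₁) • p₁ + s₁ • p₂) - ((1 - t₁) • q₁ + t₁ • q₂))
        + (1 - a) • (((1 - s₂) • p₁ + s₂ • p₂) - ((1 - t₂) • q₁ + t₂ • q₂)) := by
    module
  rw [key]
  calc ‖_‖ ≤ ‖a • (((1 - s₁) • p₁ + s₁ • p₂) - ((1 - t₁) • q₁ + t₁ • q₂))‖
        + ‖(1 - a) • (((1 - s₂) • p₁ + s₂ • p₂) - ((1 - t₂) • q₁ + t₂ • q₂))‖ := norm_add_le _ _
    _ ≤ a * ε + (1 - a) * ε := by
        rw [norm_smul, norm_smul, Real.norm_eq_abs, Real.norm_eq_abs,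
          abs_of_nonneg ha, abs_of_nonneg hb]
        gcongr
    _ = ε := by ring
end

section
/- Let proj_{ij} denote the projection through a cell: for p on the entry side of a unit cell, proj_{ij}(p) is the set of points q on the exit side such that the slope of the segment pq lies in [minS_{ij}, maxS_{ij}] where 0 ≤ minS_{ij} ≤ maxS_{ij}. If I₁ ≼ I₂ ≼ ⋯ ≼ I_k is a sequence of intervals on the entry side ordered by the relation I ≼ J iff Left(I) ≼ Left(J) and Right(I) ≼ Right(J), then their projections satisfy proj_{ij}(I₁) ≼ proj_{ij}(I₂) ≼ ⋯ ≼ proj_{ij}(I_k). -/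
open Set

/-- Strict "before" order on points of the plane: `p ≺ q` iff `p.x < q.x`, or
`p.x = q.x` and `p.y > q.y`. -/
def plex (p q : ℝ × ℝ) : Prop := p.1 < q.1 ∨ (p.1 = q.1 ∧ q.2 < p.2)

/-- "Before or equal" order on points of the plane. -/
def pleq (p q : ℝ × ℝ) : Prop := plex p q ∨ p = q

/-- The entry side of the unit cell `[0,1]²`: its left and bottom edges. -/
def entrySide : Set (ℝ × ℝ) := ({(0:ℝ)} ×ˢ Icc (0:ℝ) 1) ∪ (Icc (0:ℝ) 1 ×ˢ {(0:ℝ)})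

/-- The exit side of the unit cell `[0,1]²`: its top and right edges. -/
def exitSide : Set (ℝ × ℝ) := (Icc (0:ℝ) 1 ×ˢ {(1:ℝ)}) ∪ ({(1:ℝ)} ×ˢ Icc (0:ℝ) 1)

/-- The projection of an entry-side point `p` through the cell: exit-side points `q` such that
the slope of the segment `pq` lies in `[σmin, σmax]` (expressed multiplicatively). -/
def projCell (σmin σmax : ℝ) (p : ℝ × ℝ) : Set (ℝ × ℝ) :=
  {q ∈ exitSide | p.1 ≤ q.1 ∧ p.2 ≤ q.2 ∧
    σmin * (q.1 - p.1) ≤ q.2 - p.2 ∧ q.2 - p.2 ≤ σmax * (q.1 - p.1)}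

/-- The projection of a set of entry-side points. -/
def projSet (σmin σmax : ℝ) (S : Set (ℝ × ℝ)) : Set (ℝ × ℝ) :=
  ⋃ p ∈ S, projCell σmin σmax p

/-!
On the entry side `≼` is the componentwise order "`x` up, `y` down".
The projection of an entry point `p` has a `≼`-least point `projLeft σmax p`, where the ray of slope
`σmax` leaves the cell, and a `≼`-greatest point `projRight σmin p`, along the ray of slope `σmin`.
Because `σ * x - y` increases along the entry side for `σ ≥ 0`, these exit points move forward
with `p`: if `p ≼ p'`, then `projLeft σmax p` precedes the whole projection of `p'`, and
`projRight σmin p'` follows the whole projection of `p`. Taking `p = Left(Iᵢ)` and `p'` a preimage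
of `Left(proj Iⱼ)` (dually for right endpoints) gives the claim.
-/
lemma pleq_iff_toLex_le {p q : ℝ × ℝ} :
    pleq p q ↔ toLex (p.1, OrderDual.toDual p.2) ≤ toLex (q.1, OrderDual.toDual q.2) := by
  rw [Prod.Lex.toLex_le_toLex, pleq, plex, Prod.ext_iff]
  dsimp only
  rw [OrderDual.toDual_le_toDual, le_iff_lt_or_eq]
  tauto

lemma pleq_trans {p q r : ℝ × ℝ} (hpq : pleq p q) (hqr : pleq q r) : pleq p r :=
  pleq_iff_toLex_le.2 ((pleq_iff_toLex_le.1 hpq).trans (pleq_iff_toLex_le.1 hqr))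

lemma pleq_of_fst_le_of_snd_le {p q : ℝ × ℝ} (h₁ : p.1 ≤ q.1) (h₂ : q.2 ≤ p.2) : pleq p q :=
  pleq_iff_toLex_le.2 (Prod.Lex.toLex_le_toLex'.2 ⟨h₁, fun _ => h₂⟩)

lemma pleq_iff_of_isChain {S : Set (ℝ × ℝ)}
    (hS : IsChain (fun p q : ℝ × ℝ => p.1 ≤ q.1 ∧ q.2 ≤ p.2) S) {p q : ℝ × ℝ}
    (hp : p ∈ S) (hq : q ∈ S) : pleq p q ↔ p.1 ≤ q.1 ∧ q.2 ≤ p.2 := by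
  refine ⟨fun h => ?_, fun h => pleq_of_fst_le_of_snd_le h.1 h.2⟩
  rcases eq_or_ne p q with rfl | hne
  · exact ⟨le_rfl, le_rfl⟩
  refine (hS hp hq hne).resolve_right fun ⟨h₁, h₂⟩ => ?_
  rcases h with (h | ⟨-, h⟩) | h
  exacts [h.not_ge h₁, h.not_ge h₂, hne h]

lemma mem_entrySide_iff {p : ℝ × ℝ} :
    p ∈ entrySide ↔ p ∈ Icc (0 : ℝ) 1 ×ˢ Icc (0 : ℝ) 1 ∧ (p.1 = 0 ∨ p.2 = 0) := by
  obtain ⟨a, b⟩ := p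
  simp only [entrySide, mem_union, mem_prod, mem_singleton_iff, mem_Icc]
  constructor
  · rintro (⟨rfl, hb₀, hb₁⟩ | ⟨⟨ha₀, ha₁⟩, rfl⟩) <;> norm_num [*]
  · rintro ⟨⟨⟨ha₀, ha₁⟩, hb₀, hb₁⟩, rfl | rfl⟩ <;> simp [*]

lemma mem_exitSide_iff {q : ℝ × ℝ} :
    q ∈ exitSide ↔ q ∈ Icc (0 : ℝ) 1 ×ˢ Icc (0 : ℝ) 1 ∧ (q.1 = 1 ∨ q.2 = 1) := by
  obtain ⟨a, b⟩ := q
  simp only [exitSide, mem_union, mem_prod, mem_singleton_iff, mem_Icc]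
  constructor
  · rintro (⟨⟨ha₀, ha₁⟩, rfl⟩ | ⟨rfl, hb₀, hb₁⟩) <;> norm_num [*]
  · rintro ⟨⟨⟨ha₀, ha₁⟩, hb₀, hb₁⟩, rfl | rfl⟩ <;> simp [*]

lemma isChain_entrySide :
    IsChain (fun p q : ℝ × ℝ => p.1 ≤ q.1 ∧ q.2 ≤ p.2) entrySide := by
  rintro ⟨a, b⟩ hp ⟨c, d⟩ hq -
  obtain ⟨⟨⟨ha, -⟩, hb, -⟩, rfl | rfl⟩ := mem_entrySide_iff.1 hp <;>
    obtain ⟨⟨⟨hc, -⟩, hd, -⟩, rfl | rfl⟩ := mem_entrySide_iff.1 hq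
  · exact (le_total d b).imp (⟨le_rfl, ·⟩) (⟨le_rfl, ·⟩)
  · exact Or.inl ⟨hc, hb⟩
  · exact Or.inr ⟨ha, hd⟩
  · exact (le_total a c).imp (⟨·, le_rfl⟩) (⟨·, le_rfl⟩)

lemma mem_projSet {σmin σmax : ℝ} {S : Set (ℝ × ℝ)} {q : ℝ × ℝ} :
    q ∈ projSet σmin σmax S ↔ ∃ p ∈ S, q ∈ projCell σmin σmax p := by
  simp [projSet]

/-- On a tie the top edge is chosen: for `σ = 0` and `p.2 = 1` this yields `p` itself (as
`(1 - p.2) / 0 = 0`), the `≼`-least point of the whole top edge that `p` then projects to. -/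
noncomputable def projLeft (σ : ℝ) (p : ℝ × ℝ) : ℝ × ℝ :=
  if 1 - p.2 ≤ σ * (1 - p.1) then (p.1 + (1 - p.2) / σ, 1) else (1, p.2 + σ * (1 - p.1))

noncomputable def projRight (σ : ℝ) (p : ℝ × ℝ) : ℝ × ℝ :=
  if σ * (1 - p.1) ≤ 1 - p.2 then (1, p.2 + σ * (1 - p.1)) else (p.1 + (1 - p.2) / σ, 1)

section

variable {σmin σmax : ℝ} {p p' q : ℝ × ℝ}

lemma projLeft_mem_projCell (hσ : 0 ≤ σmax) (h : σmin ≤ σmax)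
    (hp : p ∈ Icc (0 : ℝ) 1 ×ˢ Icc (0 : ℝ) 1) : projLeft σmax p ∈ projCell σmin σmax p := by
  obtain ⟨⟨hx₀, hx₁⟩, hy₀, hy₁⟩ := hp
  unfold projLeft
  split_ifs with hc
  · set t := (1 - p.2) / σmax
    have ht : σmax * t = 1 - p.2 :=
      mul_div_cancel_of_imp' fun hσ₀ => by nlinarith [hσ₀ ▸ hc]
    have ht₀ : 0 ≤ t := div_nonneg (by linarith) hσ
    have ht₁ : t ≤ 1 - p.1 := div_le_of_le_mul₀ hσ (by linarith) (by linarith)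
    refine ⟨Or.inl ⟨⟨by linarith, by linarith⟩, rfl⟩, by simp [ht₀], hy₁, ?_, by simp [ht]⟩
    simpa [ht] using mul_le_mul_of_nonneg_right h ht₀
  · have hx : 0 ≤ 1 - p.1 := by linarith
    refine ⟨Or.inr ⟨rfl, by nlinarith, by linarith⟩, hx₁, by simpa using mul_nonneg hσ hx, ?_,
      by simp⟩
    simpa using mul_le_mul_of_nonneg_right h hx

lemma projLeft_le (hσ : 0 ≤ σmax) (h₁ : p.1 ≤ p'.1) (h₂ : p'.2 ≤ p.2)
    (hq : q ∈ projCell σmin σmax p') : (projLeft σmax p).1 ≤ q.1 ∧ q.2 ≤ (projLeft σmax p).2 := by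
  obtain ⟨a, b⟩ := q
  obtain ⟨hq, hx, -, -, hslope⟩ := hq
  obtain ⟨⟨⟨-, ha⟩, -, hb⟩, hedge⟩ := mem_exitSide_iff.1 hq
  dsimp only at *
  have hmono : σmax * p.1 - p.2 ≤ σmax * p'.1 - p'.2 := by
    nlinarith [mul_le_mul_of_nonneg_left h₁ hσ]
  unfold projLeft
  split_ifs with hc
  · refine ⟨?_, hb⟩
    suffices (1 - p.2) / σmax ≤ a - p.1 by dsimp only; linarith
    refine div_le_of_le_mul₀ hσ (by linarith) ?_
    rcases hedge with rfl | rfl <;> nlinarith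
  · rcases hedge with rfl | rfl
    · exact ⟨le_rfl, by dsimp only; nlinarith⟩
    · nlinarith [mul_le_mul_of_nonneg_left ha hσ]

lemma projRight_mem_projCell (hσ : 0 ≤ σmin) (h : σmin ≤ σmax)
    (hp : p ∈ Icc (0 : ℝ) 1 ×ˢ Icc (0 : ℝ) 1) : projRight σmin p ∈ projCell σmin σmax p := by
  obtain ⟨⟨hx₀, hx₁⟩, hy₀, hy₁⟩ := hp
  have hx : 0 ≤ 1 - p.1 := by linarith
  unfold projRight
  split_ifs with hc
  · refine ⟨Or.inr ⟨rfl, by nlinarith, by linarith⟩, hx₁, by simpa using mul_nonneg hσ hx, by simp,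
      ?_⟩
    simpa using mul_le_mul_of_nonneg_right h hx
  · set t := (1 - p.2) / σmin
    have hσ' : σmin ≠ 0 := by rintro rfl; linarith
    have ht : σmin * t = 1 - p.2 := mul_div_cancel₀ _ hσ'
    have ht₀ : 0 ≤ t := div_nonneg (by linarith) hσ
    have ht₁ : t ≤ 1 - p.1 := by nlinarith
    refine ⟨Or.inl ⟨⟨by linarith, by linarith⟩, rfl⟩, by simp [ht₀], hy₁, by simp [ht], ?_⟩
    simpa [ht] using mul_le_mul_of_nonneg_right h ht₀

lemma le_projRight (hσ : 0 ≤ σmin) (h₁ : p.1 ≤ p'.1) (h₂ : p'.2 ≤ p.2)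
    (hq : q ∈ projCell σmin σmax p) :
    q.1 ≤ (projRight σmin p').1 ∧ (projRight σmin p').2 ≤ q.2 := by
  obtain ⟨a, b⟩ := q
  obtain ⟨hq, -, hy, hslope, -⟩ := hq
  obtain ⟨⟨⟨-, ha⟩, -, hb⟩, hedge⟩ := mem_exitSide_iff.1 hq
  dsimp only at *
  have hmono : σmin * p.1 - p.2 ≤ σmin * p'.1 - p'.2 := by
    nlinarith [mul_le_mul_of_nonneg_left h₁ hσ]
  unfold projRight
  split_ifs with hc
  · refine ⟨ha, ?_⟩
    rcases hedge with rfl | rfl <;> dsimp only <;> nlinarith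
  · rcases hedge with rfl | rfl
    · nlinarith [mul_le_mul_of_nonneg_left hb hσ]
    · refine ⟨?_, le_rfl⟩
      have hσ' : 0 < σmin := by
        rcases hσ.lt_or_eq with h | h
        · exact h
        · rw [← h] at hc; linarith
      suffices a - p'.1 ≤ (1 - p'.2) / σmin by dsimp only; linarith
      rw [le_div_iff₀ hσ']
      nlinarith

lemma exists_mem_projCell_pleq (hσ : 0 ≤ σmax) (h : σmin ≤ σmax) (hp : p ∈ entrySide)
    (hp' : p' ∈ entrySide) (hpp' : pleq p p') (hq : q ∈ projCell σmin σmax p') :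
    ∃ q₀ ∈ projCell σmin σmax p, pleq q₀ q := by
  obtain ⟨h₁, h₂⟩ := (pleq_iff_of_isChain isChain_entrySide hp hp').1 hpp'
  obtain ⟨hx, hy⟩ := projLeft_le hσ h₁ h₂ hq
  exact ⟨_, projLeft_mem_projCell hσ h (mem_entrySide_iff.1 hp).1, pleq_of_fst_le_of_snd_le hx hy⟩

lemma exists_pleq_mem_projCell (hσ : 0 ≤ σmin) (h : σmin ≤ σmax) (hp : p ∈ entrySide)
    (hp' : p' ∈ entrySide) (hpp' : pleq p p') (hq : q ∈ projCell σmin σmax p) :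
    ∃ q₀ ∈ projCell σmin σmax p', pleq q q₀ := by
  obtain ⟨h₁, h₂⟩ := (pleq_iff_of_isChain isChain_entrySide hp hp').1 hpp'
  obtain ⟨hx, hy⟩ := le_projRight hσ h₁ h₂ hq
  exact ⟨_, projRight_mem_projCell hσ h (mem_entrySide_iff.1 hp').1, pleq_of_fst_le_of_snd_le hx hy⟩

end

theorem proj_preserves_order_general (σmin σmax : ℝ) (h0 : 0 ≤ σmin) (h1 : σmin ≤ σmax)
    (k : ℕ) (I : Fin k → Set (ℝ × ℝ)) (L R : Fin k → ℝ × ℝ)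
    (hIE : ∀ i, I i ⊆ entrySide)
    (hL : ∀ i, L i ∈ I i) (hR : ∀ i, R i ∈ I i)
    (hLmin : ∀ i, ∀ p ∈ I i, pleq (L i) p) (hRmax : ∀ i, ∀ p ∈ I i, pleq p (R i))
    (hord : ∀ i j : Fin k, i ≤ j → pleq (L i) (L j) ∧ pleq (R i) (R j))
    (L' R' : Fin k → ℝ × ℝ)
    (hL' : ∀ i, L' i ∈ projSet σmin σmax (I i) ∧
      ∀ q ∈ projSet σmin σmax (I i), pleq (L' i) q)
    (hR' : ∀ i, R' i ∈ projSet σmin σmax (I i) ∧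
      ∀ q ∈ projSet σmin σmax (I i), pleq q (R' i)) :
    ∀ i j : Fin k, i ≤ j → pleq (L' i) (L' j) ∧ pleq (R' i) (R' j) := by
  intro i j hij
  constructor
  · obtain ⟨p, hp, hq⟩ := mem_projSet.1 (hL' j).1
    obtain ⟨q₀, hq₀, hq₀q⟩ := exists_mem_projCell_pleq (h0.trans h1) h1 (hIE i (hL i)) (hIE j hp)
      (pleq_trans (hord i j hij).1 (hLmin j p hp)) hq
    exact pleq_trans ((hL' i).2 q₀ (mem_projSet.2 ⟨L i, hL i, hq₀⟩)) hq₀q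
  · obtain ⟨p, hp, hq⟩ := mem_projSet.1 (hR' i).1
    obtain ⟨q₀, hq₀, hqq₀⟩ := exists_pleq_mem_projCell h0 h1 (hIE i hp) (hIE j (hR j))
      (pleq_trans (hRmax i p hp) (hord i j hij).2) hq
    exact pleq_trans hqq₀ ((hR' j).2 q₀ (mem_projSet.2 ⟨R j, hR j, hq₀⟩))

/-- projecting a `≼`-ordered sequence of intervals on the entry side of a cell
through the cell preserves the interval order `I ≼ J ↔ Left(I) ≼ Left(J) ∧ Right(I) ≼ Right(J)`
on the exit side. -/
theorem proj_preserves_order (σmin σmax : ℝ) (h0 : 0 ≤ σmin) (h1 : σmin ≤ σmax)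
    (k : ℕ) (I : Fin k → Set (ℝ × ℝ)) (L R : Fin k → ℝ × ℝ)
    (hIE : ∀ i, I i ⊆ entrySide)
    (hL : ∀ i, L i ∈ I i) (hR : ∀ i, R i ∈ I i)
    (hLmin : ∀ i, ∀ p ∈ I i, pleq (L i) p) (hRmax : ∀ i, ∀ p ∈ I i, pleq p (R i))
    (hIint : ∀ i, ∀ x ∈ entrySide, pleq (L i) x → pleq x (R i) → x ∈ I i)
    (hord : ∀ i j : Fin k, i ≤ j → pleq (L i) (L j) ∧ pleq (R i) (R j))
    (L' R' : Fin k → ℝ × ℝ)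
    (hL' : ∀ i, L' i ∈ projSet σmin σmax (I i) ∧
      ∀ q ∈ projSet σmin σmax (I i), pleq (L' i) q)
    (hR' : ∀ i, R' i ∈ projSet σmin σmax (I i) ∧
      ∀ q ∈ projSet σmin σmax (I i), pleq q (R' i)) :
    ∀ i j : Fin k, i ≤ j → pleq (L' i) (L' j) ∧ pleq (R' i) (R' j) :=
  proj_preserves_order_general σmin σmax h0 h1 k I L R hIE hL hR hLmin hRmax hord L' R' hL' hR'
end

section
/- For any two points u, v in the feasible set F_i of row i of the free space diagram with u.x ≤ v.x, and for any j ≥ i, the left pointers satisfy lp_j(u).x ≤ lp_j(v).x and the right pointers satisfy rp_j(u).x ≤ rp_j(v).x (whenever these pointers are defined). -/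
open Set

/-- `p` is the leftmost point on the row `y = j` reachable from `u` in `F`. -/
def IsLeftPointer (F : Set (ℝ × ℝ)) (j : ℝ) (u p : ℝ × ℝ) : Prop :=
  p.2 = j ∧ MonFeasible F u p ∧ ∀ w : ℝ × ℝ, w.2 = j → MonFeasible F u w → p.1 ≤ w.1

/-- `p` is the rightmost point on the row `y = j` reachable from `u` in `F`. -/
def IsRightPointer (F : Set (ℝ × ℝ)) (j : ℝ) (u p : ℝ × ℝ) : Prop :=
  p.2 = j ∧ MonFeasible F u p ∧ ∀ w : ℝ × ℝ, w.2 = j → MonFeasible F u w → w.1 ≤ p.1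

/-- Splicing: if two feasible monotone curves meet at `γ s₀ = δ t₀`, then the start of the
first curve reaches the end of the second. -/
lemma splice_lemma (F : Set (ℝ × ℝ)) (γ δ : ℝ → ℝ × ℝ)
    (hγc : ContinuousOn γ (Icc 0 1)) (hδc : ContinuousOn δ (Icc 0 1))
    (hγF : ∀ t ∈ Icc (0:ℝ) 1, γ t ∈ F) (hδF : ∀ t ∈ Icc (0:ℝ) 1, δ t ∈ F)
    (hγm : MonotoneCurve γ) (hδm : MonotoneCurve δ)
    (s₀ t₀ : ℝ) (hs₀ : s₀ ∈ Icc (0:ℝ) 1) (ht₀ : t₀ ∈ Icc (0:ℝ) 1)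
    (hmeet : γ s₀ = δ t₀) :
    MonFeasible F (γ 0) (δ 1) := by
  classical
  set a : ℝ → ℝ := fun t => 2 * min (max t 0) (1/2) * s₀ with ha
  set b : ℝ → ℝ := fun t => t₀ + (2 * max (min t 1) (1/2) - 1) * (1 - t₀) with hb
  have haI : ∀ t, a t ∈ Icc (0:ℝ) 1 := by
    intro t
    have h1 : (0:ℝ) ≤ min (max t 0) (1/2) := le_min (le_max_right _ _) (by norm_num)
    have h2 : min (max t 0) (1/2) ≤ 1/2 := min_le_right _ _
    constructor
    · exact mul_nonneg (by linarith) hs₀.1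
    · calc 2 * min (max t 0) (1/2) * s₀ ≤ 2 * (1/2) * s₀ := by nlinarith [hs₀.1]
        _ = s₀ := by ring
        _ ≤ 1 := hs₀.2
  have hbI : ∀ t, b t ∈ Icc (0:ℝ) 1 := by
    intro t
    have h1 : (1/2:ℝ) ≤ max (min t 1) (1/2) := le_max_right _ _
    have h2 : max (min t 1) (1/2) ≤ 1 := max_le (min_le_right _ _) (by norm_num)
    simp only [hb]
    constructor
    · nlinarith [mul_nonneg (by linarith : (0:ℝ) ≤ 2 * max (min t 1) (1/2) - 1)
        (by linarith [ht₀.2] : (0:ℝ) ≤ 1 - t₀), ht₀.1]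
    · nlinarith [mul_nonneg (by linarith : (0:ℝ) ≤ 2 - 2 * max (min t 1) (1/2))
        (by linarith [ht₀.2] : (0:ℝ) ≤ 1 - t₀)]
  have hbt₀ : ∀ t, t₀ ≤ b t := by
    intro t
    have h1 : (1/2:ℝ) ≤ max (min t 1) (1/2) := le_max_right _ _
    simp only [hb]
    nlinarith [ht₀.2]
  have haMono : Monotone a := by
    intro x y hxy
    have : min (max x 0) (1/2) ≤ min (max y 0) (1/2) :=
      min_le_min (max_le_max hxy le_rfl) le_rfl
    have hs := hs₀.1
    simp only [ha]
    nlinarith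
  have hbMono : Monotone b := by
    intro x y hxy
    have : max (min x 1) (1/2) ≤ max (min y 1) (1/2) :=
      max_le_max (min_le_min hxy le_rfl) le_rfl
    have ht := ht₀.2
    simp only [hb]
    nlinarith
  have ha12 : a (1/2) = s₀ := by simp [ha]
  have hb12 : b (1/2) = t₀ := by norm_num [hb]
  have ha0 : a 0 = 0 := by norm_num [ha]
  have hb1 : b 1 = 1 := by norm_num [hb]
  set η : ℝ → ℝ × ℝ := fun t => if t ≤ 1/2 then γ (a t) else δ (b t) with hη
  have hηval : ∀ t, (t ≤ 1/2 → η t = γ (a t)) ∧ (¬ t ≤ 1/2 → η t = δ (b t)) :=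
    fun t => ⟨fun h => if_pos h, fun h => if_neg h⟩
  have haCont : Continuous a := by
    apply Continuous.mul (Continuous.mul continuous_const ?_) continuous_const
    exact (continuous_id.max continuous_const).min continuous_const
  have hbCont : Continuous b := by
    apply Continuous.add continuous_const
    apply Continuous.mul ?_ continuous_const
    apply Continuous.sub ?_ continuous_const
    exact Continuous.mul continuous_const ((continuous_id.min continuous_const).max continuous_const)
  have hγa : Continuous fun t => γ (a t) := by
    apply hγc.comp_continuous haCont
    intro t; exact haI t
  have hδb : Continuous fun t => δ (b t) := by
    apply hδc.comp_continuous hbCont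
    intro t; exact hbI t
  have hηc : Continuous η := by
    apply Continuous.if_le hγa hδb continuous_id continuous_const
    intro t ht
    have ht' : t = 1/2 := ht
    subst ht'
    rw [ha12, hb12, hmeet]
  refine ⟨η, hηc.continuousOn, ?_, ?_, ?_, ?_, ?_⟩
  · rw [(hηval 0).1 (by norm_num), ha0]
  · rw [(hηval 1).2 (by norm_num), hb1]
  · intro t ht
    by_cases h : t ≤ 1/2
    · rw [(hηval t).1 h]; exact hγF _ (haI t)
    · rw [(hηval t).2 h]; exact hδF _ (hbI t)
  · intro x hx y hy hxy
    by_cases h1 : x ≤ 1/2 <;> by_cases h2 : y ≤ 1/2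
    · simp only [(hηval x).1 h1, (hηval y).1 h2]
      exact hγm.1 (haI x) (haI y) (haMono hxy)
    · simp only [(hηval x).1 h1, (hηval y).2 h2]
      calc (γ (a x)).1 ≤ (γ s₀).1 := by
            rw [← ha12]; exact hγm.1 (haI x) (ha12 ▸ hs₀) (haMono h1)
        _ = (δ t₀).1 := by rw [hmeet]
        _ ≤ (δ (b y)).1 := hδm.1 ht₀ (hbI y) (hbt₀ y)
    · exact absurd (hxy.trans h2) h1
    · simp only [(hηval x).2 h1, (hηval y).2 h2]
      exact hδm.1 (hbI x) (hbI y) (hbMono hxy)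
  · intro x hx y hy hxy
    by_cases h1 : x ≤ 1/2 <;> by_cases h2 : y ≤ 1/2
    · simp only [(hηval x).1 h1, (hηval y).1 h2]
      exact hγm.2 (haI x) (haI y) (haMono hxy)
    · simp only [(hηval x).1 h1, (hηval y).2 h2]
      calc (γ (a x)).2 ≤ (γ s₀).2 := by
            rw [← ha12]; exact hγm.2 (haI x) (ha12 ▸ hs₀) (haMono h1)
        _ = (δ t₀).2 := by rw [hmeet]
        _ ≤ (δ (b y)).2 := hδm.2 ht₀ (hbI y) (hbt₀ y)
    · exact absurd (hxy.trans h2) h1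
    · simp only [(hηval x).2 h1, (hηval y).2 h2]
      exact hδm.2 (hbI x) (hbI y) (hbMono hxy)

/-- Crossing lemma (intersection form): two continuous monotone curves between the same two
rows, with starting points and ending points in opposite horizontal order, must intersect. -/
lemma crossing (γ δ : ℝ → ℝ × ℝ)
    (hγc : ContinuousOn γ (Icc 0 1)) (hδc : ContinuousOn δ (Icc 0 1))
    (hγm : MonotoneCurve γ) (hδm : MonotoneCurve δ)
    (h0 : (γ 0).2 = (δ 0).2) (h1 : (γ 1).2 = (δ 1).2)
    (hx0 : (γ 0).1 ≤ (δ 0).1) (hx1 : (δ 1).1 ≤ (γ 1).1) :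
    ∃ s ∈ Icc (0:ℝ) 1, ∃ t ∈ Icc (0:ℝ) 1, γ s = δ t := by
  have h01 : (0:ℝ) ∈ Icc (0:ℝ) 1 := by norm_num
  have h11 : (1:ℝ) ∈ Icc (0:ℝ) 1 := by norm_num
  have hδ2c : ContinuousOn (fun t => (δ t).2) (Icc (0:ℝ) 1) :=
    continuous_snd.comp_continuousOn hδc
  have hδ1c : ContinuousOn (fun t => (δ t).1) (Icc (0:ℝ) 1) :=
    continuous_fst.comp_continuousOn hδc
  -- the compact sets
  set S : Set (ℝ × ℝ) := Icc (0:ℝ) 1 ×ˢ Icc (0:ℝ) 1 with hS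
  have hScpt : IsCompact S := isCompact_Icc.prod isCompact_Icc
  have hfc : ContinuousOn (fun p : ℝ × ℝ => (γ p.1, δ p.2)) S := by
    apply ContinuousOn.prodMk
    · exact hγc.comp continuous_fst.continuousOn (fun p hp => hp.1)
    · exact hδc.comp continuous_snd.continuousOn (fun p hp => hp.2)
  have key : ∀ (P : ℝ → ℝ → Prop), (IsClosed {q : (ℝ × ℝ) × ℝ × ℝ | q.2.2 = q.1.2 ∧ P q.1.1 q.2.1}) →
      IsClosed {s : ℝ | ∃ t ∈ Icc (0:ℝ) 1, s ∈ Icc (0:ℝ) 1 ∧ (δ t).2 = (γ s).2 ∧ P (γ s).1 (δ t).1} := by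
    intro P hPcl
    have hK : IsClosed (S ∩ (fun p : ℝ × ℝ => (γ p.1, δ p.2)) ⁻¹'
        {q : (ℝ × ℝ) × ℝ × ℝ | q.2.2 = q.1.2 ∧ P q.1.1 q.2.1}) :=
      hfc.preimage_isClosed_of_isClosed (isClosed_Icc.prod isClosed_Icc) hPcl
    have hKcpt : IsCompact (S ∩ (fun p : ℝ × ℝ => (γ p.1, δ p.2)) ⁻¹'
        {q : (ℝ × ℝ) × ℝ × ℝ | q.2.2 = q.1.2 ∧ P q.1.1 q.2.1}) :=
      hScpt.of_isClosed_subset hK inter_subset_left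
    have himg : {s : ℝ | ∃ t ∈ Icc (0:ℝ) 1, s ∈ Icc (0:ℝ) 1 ∧ (δ t).2 = (γ s).2 ∧ P (γ s).1 (δ t).1}
        = Prod.fst '' (S ∩ (fun p : ℝ × ℝ => (γ p.1, δ p.2)) ⁻¹'
          {q : (ℝ × ℝ) × ℝ × ℝ | q.2.2 = q.1.2 ∧ P q.1.1 q.2.1}) := by
      ext s
      constructor
      · rintro ⟨t, ht, hs, heq, hP⟩
        exact ⟨(s, t), ⟨⟨hs, ht⟩, heq, hP⟩, rfl⟩
      · rintro ⟨⟨s', t⟩, ⟨⟨hs, ht⟩, heq, hP⟩, rfl⟩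
        exact ⟨t, ht, hs, heq, hP⟩
    rw [himg]
    exact (hKcpt.image continuous_fst).isClosed
  set C₁ : Set ℝ :=
    {s : ℝ | ∃ t ∈ Icc (0:ℝ) 1, s ∈ Icc (0:ℝ) 1 ∧ (δ t).2 = (γ s).2 ∧ (δ t).1 ≤ (γ s).1} with hC₁
  set C₂ : Set ℝ :=
    {s : ℝ | ∃ t ∈ Icc (0:ℝ) 1, s ∈ Icc (0:ℝ) 1 ∧ (δ t).2 = (γ s).2 ∧ (γ s).1 ≤ (δ t).1} with hC₂
  have hC₁cl : IsClosed C₁ := by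
    apply key (fun x y => y ≤ x)
    exact (isClosed_eq (continuous_snd.comp continuous_snd) (continuous_snd.comp continuous_fst)).inter
      (isClosed_le (continuous_fst.comp continuous_snd) (continuous_fst.comp continuous_fst))
  have hC₂cl : IsClosed C₂ := by
    apply key (fun x y => x ≤ y)
    exact (isClosed_eq (continuous_snd.comp continuous_snd) (continuous_snd.comp continuous_fst)).inter
      (isClosed_le (continuous_fst.comp continuous_fst) (continuous_fst.comp continuous_snd))
  have hcover : Icc (0:ℝ) 1 ⊆ C₁ ∪ C₂ := by
    intro s hs
    -- the level (γ s).2 lies between (δ 0).2 and (δ 1).2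
    have hlvl : (γ s).2 ∈ Icc ((δ 0).2) ((δ 1).2) := by
      constructor
      · rw [← h0]; exact hγm.2 h01 hs hs.1
      · rw [← h1]; exact hγm.2 hs h11 hs.2
    obtain ⟨t, ht, hteq⟩ := intermediate_value_Icc (by norm_num : (0:ℝ) ≤ 1) hδ2c hlvl
    rcases le_total ((δ t).1) ((γ s).1) with hle | hle
    · exact Or.inl ⟨t, ht, hs, hteq, hle⟩
    · exact Or.inr ⟨t, ht, hs, hteq, hle⟩
  have hne₁ : (Icc (0:ℝ) 1 ∩ C₁).Nonempty := ⟨1, h11, 1, h11, h11, h1.symm, hx1⟩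
  have hne₂ : (Icc (0:ℝ) 1 ∩ C₂).Nonempty := ⟨0, h01, 0, h01, h01, h0.symm, hx0⟩
  obtain ⟨s, hsI, hs1, hs2⟩ :=
    isPreconnected_closed_iff.mp isPreconnected_Icc C₁ C₂ hC₁cl hC₂cl hcover hne₁ hne₂
  obtain ⟨t₁, ht₁, hs', heq₁, hle₁⟩ := hs1
  obtain ⟨t₂, ht₂, -, heq₂, hle₂⟩ := hs2
  rcases le_total t₁ t₂ with htt | htt
  · -- IVT for the first coordinate of δ on [t₁, t₂]
    have hcont : ContinuousOn (fun t => (δ t).1) (Icc t₁ t₂) :=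
      hδ1c.mono (Icc_subset_Icc ht₁.1 ht₂.2)
    obtain ⟨t, ht, hteq⟩ := intermediate_value_Icc htt hcont ⟨hle₁, hle₂⟩
    have htI : t ∈ Icc (0:ℝ) 1 := ⟨ht₁.1.trans ht.1, ht.2.trans ht₂.2⟩
    refine ⟨s, hs', t, htI, ?_⟩
    have h2 : (δ t).2 = (γ s).2 := by
      have hA : (δ t₁).2 ≤ (δ t).2 := hδm.2 ht₁ htI ht.1
      have hB : (δ t).2 ≤ (δ t₂).2 := hδm.2 htI ht₂ ht.2
      rw [heq₁] at hA; rw [heq₂] at hB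
      linarith
    exact Prod.ext hteq.symm h2.symm
  · -- then everything is forced to be equal
    have hA : (δ t₂).1 ≤ (δ t₁).1 := hδm.1 ht₂ ht₁ htt
    have heq : (δ t₂).1 = (γ s).1 := le_antisymm (hA.trans hle₁) hle₂
    exact ⟨s, hs', t₂, ht₂, Prod.ext heq.symm heq₂.symm⟩

/-- Crossing lemma: from `u ↝ p` and `v ↝ q` with `u, v` on the same row, `p, q` on the
same row, `u.x ≤ v.x` and `q.x ≤ p.x`, we get `u ↝ q` and `v ↝ p`. -/
lemma crossing_lemma_s9 (F : Set (ℝ × ℝ)) (u v p q : ℝ × ℝ)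
    (huv2 : u.2 = v.2) (hpq2 : p.2 = q.2) (huv : u.1 ≤ v.1) (hqp : q.1 ≤ p.1)
    (hup : MonFeasible F u p) (hvq : MonFeasible F v q) :
    MonFeasible F u q ∧ MonFeasible F v p := by
  obtain ⟨γ, hγc, hγ0, hγ1, hγF, hγm⟩ := hup
  obtain ⟨δ, hδc, hδ0, hδ1, hδF, hδm⟩ := hvq
  obtain ⟨s, hs, t, ht, hst⟩ := crossing γ δ hγc hδc hγm hδm
    (by rw [hγ0, hδ0]; exact huv2) (by rw [hγ1, hδ1]; exact hpq2)
    (by rw [hγ0, hδ0]; exact huv) (by rw [hγ1, hδ1]; exact hqp)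
  constructor
  · have := splice_lemma F γ δ hγc hδc hγF hδF hγm hδm s t hs ht hst
    rwa [hγ0, hδ1] at this
  · have := splice_lemma F δ γ hδc hγc hδF hγF hδm hγm t s ht hs hst.symm
    rwa [hδ0, hγ1] at this

/-- for `u, v` on row `i` with `u.x ≤ v.x` and any row `j ≥ i`, the left
pointers satisfy `lp_j(u).x ≤ lp_j(v).x` and the right pointers `rp_j(u).x ≤ rp_j(v).x`. -/
theorem pointers_monotone (F : Set (ℝ × ℝ)) (i j : ℝ) (hij : i ≤ j)
    (u v : ℝ × ℝ) (hu2 : u.2 = i) (hv2 : v.2 = i) (huv : u.1 ≤ v.1)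
    (lu lv ru rv : ℝ × ℝ)
    (hlu : IsLeftPointer F j u lu) (hlv : IsLeftPointer F j v lv)
    (hru : IsRightPointer F j u ru) (hrv : IsRightPointer F j v rv) :
    lu.1 ≤ lv.1 ∧ ru.1 ≤ rv.1 := by
  have huv2 : u.2 = v.2 := by rw [hu2, hv2]
  constructor
  · rcases le_total lu.1 lv.1 with h | h
    · exact h
    · have := crossing_lemma_s9 F u v lu lv huv2 (by rw [hlu.1, hlv.1]) huv h hlu.2.1 hlv.2.1
      exact hlu.2.2 lv hlv.1 this.1
  · rcases le_total ru.1 rv.1 with h | h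
    · exact h
    · have := crossing_lemma_s9 F u v ru rv huv2 (by rw [hru.1, hrv.1]) huv h hru.2.1 hrv.2.1
      exact hrv.2.2 ru hru.1 this.2
end

section
/- Let R(i) denote the set of points on row i of the free space diagram reachable from the feasible set F₀ on row 0 by a monotone feasible curve. Then for any 0 ≤ i < j ≤ m and any point u ∈ R(i), the set of points on row j reachable from u equals R(j) ∩ [lp_j(u), rp_j(u)], i.e., the reachable set of u on row j is the intersection of the global reachable set R(j) with the horizontal interval between u's left and right pointers on row j. -/
open Set

/-- `Reach_j(S)`: points on the row `y = j` reachable from some point of `S`. -/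
def ReachRow (F : Set (ℝ × ℝ)) (j : ℝ) (S : Set (ℝ × ℝ)) : Set (ℝ × ℝ) :=
  {v : ℝ × ℝ | v.2 = j ∧ ∃ u ∈ S, MonFeasible F u v}

/-- `R(j)`: points on row `y = j` reachable from the feasible points `F₀` of row `y = 0`. -/
def Rrow (F : Set (ℝ × ℝ)) (j : ℝ) : Set (ℝ × ℝ) :=
  ReachRow F j {u ∈ F | u.2 = 0}

/-!
Along a monotone curve the coordinate sum `x + y` is non-decreasing and the point only moves while
the sum grows, with `|Δ(x - y)| ≤ Δ(x + y)`; so the curve is the graph of a 1-Lipschitz function of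
`x + y`. Two monotone curves that start and end on common rows, the first starting to the left and
ending to the right of the second, therefore cross by the intermediate value theorem, and splicing
them at the crossing exchanges their ends. A point `w ∈ R(j)` between `lp_j(u)` and `rp_j(u)` is
reached by a curve from `F₀` that passes row `i` at some `u'`; the curve from `u'` to `w` crosses
the curve from `u` to `lp_j(u)` or the one from `u` to `rp_j(u)`, according to the side of `u`
on which `u'` lies, and either way `u ↝ w`.
-/

section

variable {F : Set (ℝ × ℝ)}

lemma monotoneCurve_iff_monotoneOn {γ : ℝ → ℝ × ℝ} :
    MonotoneCurve γ ↔ MonotoneOn γ (Icc 0 1) := by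
  simp only [MonotoneCurve, MonotoneOn, Prod.le_def, imp_and, forall_and]

lemma monFeasible_iff {u v : ℝ × ℝ} :
    MonFeasible F u v ↔ ∃ γ : ℝ → ℝ × ℝ, ContinuousOn γ (Icc 0 1) ∧ MapsTo γ (Icc 0 1) F ∧
      MonotoneOn γ (Icc 0 1) ∧ γ 0 = u ∧ γ 1 = v := by
  simp only [MonFeasible, monotoneCurve_iff_monotoneOn, MapsTo]
  tauto

lemma monFeasible_apply_of_le {γ : ℝ → ℝ × ℝ} (hc : ContinuousOn γ (Icc 0 1))
    (hF : MapsTo γ (Icc 0 1) F) (hm : MonotoneOn γ (Icc 0 1)) {s t : ℝ} (hs : s ∈ Icc (0 : ℝ) 1)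
    (ht : t ∈ Icc (0 : ℝ) 1) (hst : s ≤ t) : MonFeasible F (γ s) (γ t) := by
  set φ : ℝ → ℝ := fun r => s + r * (t - s)
  have hφm : Monotone φ := fun a b hab =>
    add_le_add_right (mul_le_mul_of_nonneg_right hab (sub_nonneg.2 hst)) s
  have hφ : MapsTo φ (Icc 0 1) (Icc 0 1) := fun r hr =>
    ⟨by nlinarith [hr.1, hs.1], by nlinarith [hr.2, ht.2]⟩
  exact monFeasible_iff.2 ⟨γ ∘ φ, hc.comp (by fun_prop) hφ, hF.comp hφ,
    hm.comp (hφm.monotoneOn _) hφ, by simp [φ], by simp [φ]⟩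

lemma MonFeasible.trans {a b c : ℝ × ℝ} (hab : MonFeasible F a b)
    (hbc : MonFeasible F b c) : MonFeasible F a c := by
  obtain ⟨γ, hγc, hγF, hγm, rfl, rfl⟩ := monFeasible_iff.1 hab
  obtain ⟨δ, hδc, hδF, hδm, hδ0, rfl⟩ := monFeasible_iff.1 hbc
  set η : ℝ → ℝ × ℝ := fun t => if t ≤ 1 / 2 then γ (2 * t) else δ (2 * t - 1)
  have hleft : EqOn (γ ∘ (2 * ·)) η (Icc 0 (1 / 2)) := fun t ht => (if_pos ht.2).symm
  have hright : EqOn (δ ∘ (2 * · - 1)) η (Icc (1 / 2) 1) := by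
    intro t ht
    rcases ht.1.eq_or_lt with rfl | h
    · norm_num [η, hδ0]
    · exact (if_neg (not_le.2 h)).symm
  have hmapsl : MapsTo (2 * ·) (Icc (0 : ℝ) (1 / 2)) (Icc 0 1) := fun t ht =>
    ⟨by linarith [ht.1], by linarith [ht.2]⟩
  have hmapsr : MapsTo (2 * · - 1) (Icc (1 / 2 : ℝ) 1) (Icc 0 1) := fun t ht =>
    ⟨by linarith [ht.1], by linarith [ht.2]⟩
  have hsplit : Icc (0 : ℝ) 1 = Icc 0 (1 / 2) ∪ Icc (1 / 2) 1 :=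
    (Icc_union_Icc_eq_Icc (by norm_num) (by norm_num)).symm
  refine monFeasible_iff.2 ⟨η, ?_, ?_, ?_, by simp [η], by norm_num [η]⟩ <;> rw [hsplit]
  · exact ((hγc.comp (by fun_prop) hmapsl).congr hleft.symm).union_of_isClosed
      ((hδc.comp (by fun_prop) hmapsr).congr hright.symm) isClosed_Icc isClosed_Icc
  · exact ((hγF.comp hmapsl).congr hleft).union ((hδF.comp hmapsr).congr hright)
  · refine MonotoneOn.union_right ?_ ?_ (isGreatest_Icc (by norm_num)) (isLeast_Icc (by norm_num))
    · exact (hγm.comp (fun x _ y _ h => by linarith) hmapsl).congr hleft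
    · exact (hδm.comp (fun x _ y _ h => by linarith) hmapsr).congr hright

lemma abs_sub_sub_le_abs_add_sub_add {p q : ℝ × ℝ} (h : p ≤ q ∨ q ≤ p) :
    |(p.1 - p.2) - (q.1 - q.2)| ≤ |(p.1 + p.2) - (q.1 + q.2)| := by
  rcases h with ⟨h1, h2⟩ | ⟨h1, h2⟩ <;> refine abs_le.2 ⟨?_, ?_⟩ <;>
    linarith [le_abs_self ((p.1 + p.2) - (q.1 + q.2)), neg_abs_le ((p.1 + p.2) - (q.1 + q.2))]

lemma MonotoneOn.exists_lipschitzOnWith_graph {γ : ℝ → ℝ × ℝ} (hm : MonotoneOn γ (Icc 0 1))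
    (hc : ContinuousOn γ (Icc 0 1)) :
    ∃ H : ℝ → ℝ, LipschitzOnWith 1 H (Icc ((γ 0).1 + (γ 0).2) ((γ 1).1 + (γ 1).2)) ∧
      ∀ x ∈ Icc ((γ 0).1 + (γ 0).2) ((γ 1).1 + (γ 1).2),
        ∃ s ∈ Icc (0 : ℝ) 1, (γ s).1 + (γ s).2 = x ∧ (γ s).1 - (γ s).2 = H x := by
  set σ : ℝ → ℝ := fun s => (γ s).1 + (γ s).2
  have hσ : ∀ x ∈ Icc (σ 0) (σ 1), ∃ s ∈ Icc (0 : ℝ) 1, σ s = x := fun x hx =>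
    intermediate_value_Icc zero_le_one (by fun_prop) hx
  set τ : ℝ → ℝ := Function.invFunOn σ (Icc 0 1)
  refine ⟨fun x => (γ (τ x)).1 - (γ (τ x)).2, ?_, fun x hx =>
    ⟨τ x, Function.invFunOn_mem (hσ x hx), Function.invFunOn_eq (hσ x hx), rfl⟩⟩
  refine LipschitzOnWith.of_dist_le_mul fun x hx y hy => ?_
  obtain ⟨hτx, hσx⟩ := Function.invFunOn_pos (hσ x hx)
  obtain ⟨hτy, hσy⟩ := Function.invFunOn_pos (hσ y hy)
  rw [NNReal.coe_one, one_mul, Real.dist_eq, Real.dist_eq]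
  calc _ ≤ |σ (τ x) - σ (τ y)| :=
        abs_sub_sub_le_abs_add_sub_add ((le_total _ _).imp (hm hτx hτy) (hm hτy hτx))
    _ = |x - y| := by rw [hσx, hσy]

lemma exists_crossing_of_monotoneOn {γ δ : ℝ → ℝ × ℝ}
    (hγc : ContinuousOn γ (Icc 0 1)) (hγm : MonotoneOn γ (Icc 0 1))
    (hδc : ContinuousOn δ (Icc 0 1)) (hδm : MonotoneOn δ (Icc 0 1))
    (h0 : (γ 0).2 = (δ 0).2) (h1 : (γ 1).2 = (δ 1).2)
    (hl : (γ 0).1 ≤ (δ 0).1) (hr : (δ 1).1 ≤ (γ 1).1) :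
    ∃ s ∈ Icc (0 : ℝ) 1, ∃ t ∈ Icc (0 : ℝ) 1, γ s = δ t := by
  obtain ⟨H, hH, hgraph⟩ := hγm.exists_lipschitzOnWith_graph hγc
  have h0mem : (0 : ℝ) ∈ Icc (0 : ℝ) 1 := left_mem_Icc.2 zero_le_one
  have h1mem : (1 : ℝ) ∈ Icc (0 : ℝ) 1 := right_mem_Icc.2 zero_le_one
  have hrange : MapsTo (fun t => (δ t).1 + (δ t).2) (Icc 0 1)
      (Icc ((γ 0).1 + (γ 0).2) ((γ 1).1 + (γ 1).2)) := fun t ht =>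
    have h0t := hδm h0mem ht ht.1
    have ht1 := hδm ht h1mem ht.2
    ⟨by linarith [h0t.1, h0t.2], by linarith [ht1.1, ht1.2]⟩
  -- `g t / 2` is the horizontal offset from `δ t` to the point of `γ` on its antidiagonal
  set g : ℝ → ℝ := fun t => H ((δ t).1 + (δ t).2) - ((δ t).1 - (δ t).2)
  have hg : ContinuousOn g (Icc 0 1) :=
    (hH.continuousOn.comp (by fun_prop) hrange).sub (by fun_prop)
  have hg0 : g 0 ≤ 0 := by
    obtain ⟨s, hs, hsum, hdiff⟩ := hgraph _ (hrange h0mem)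
    have := (hγm h0mem hs hs.1).2
    simp only [g]
    linarith
  have hg1 : 0 ≤ g 1 := by
    obtain ⟨s, hs, hsum, hdiff⟩ := hgraph _ (hrange h1mem)
    have := (hγm hs h1mem hs.2).2
    simp only [g]
    linarith
  obtain ⟨t, ht, hgt⟩ := intermediate_value_Icc zero_le_one hg ⟨hg0, hg1⟩
  obtain ⟨s, hs, hsum, hdiff⟩ := hgraph _ (hrange ht)
  simp only [g] at hgt
  exact ⟨s, hs, t, ht, Prod.ext (by linarith) (by linarith)⟩

lemma MonFeasible.cross {a b c d : ℝ × ℝ} (hab : MonFeasible F a b)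
    (hcd : MonFeasible F c d) (hac : a.2 = c.2) (hbd : b.2 = d.2) (hca : a.1 ≤ c.1)
    (hdb : d.1 ≤ b.1) : MonFeasible F a d ∧ MonFeasible F c b := by
  obtain ⟨γ, hγc, hγF, hγm, rfl, rfl⟩ := monFeasible_iff.1 hab
  obtain ⟨δ, hδc, hδF, hδm, rfl, rfl⟩ := monFeasible_iff.1 hcd
  obtain ⟨s, hs, t, ht, hst⟩ :=
    exists_crossing_of_monotoneOn hγc hγm hδc hδm hac hbd hca hdb
  have h0 : (0 : ℝ) ∈ Icc (0 : ℝ) 1 := left_mem_Icc.2 zero_le_one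
  have h1 : (1 : ℝ) ∈ Icc (0 : ℝ) 1 := right_mem_Icc.2 zero_le_one
  constructor
  · refine (monFeasible_apply_of_le hγc hγF hγm h0 hs hs.1).trans ?_
    rw [hst]
    exact monFeasible_apply_of_le hδc hδF hδm ht h1 ht.2
  · refine (monFeasible_apply_of_le hδc hδF hδm h0 ht ht.1).trans ?_
    rw [← hst]
    exact monFeasible_apply_of_le hγc hγF hγm hs h1 hs.2

lemma MonFeasible.of_between {u u' l r v : ℝ × ℝ} (hul : MonFeasible F u l)
    (hur : MonFeasible F u r) (hu'v : MonFeasible F u' v) (hu' : u'.2 = u.2) (hl : l.2 = v.2)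
    (hr : r.2 = v.2) (hlv : l.1 ≤ v.1) (hvr : v.1 ≤ r.1) : MonFeasible F u v := by
  rcases le_total u'.1 u.1 with h | h
  · exact (hu'v.cross hul hu' hl.symm h hlv).2
  · exact (hur.cross hu'v hu'.symm hr h hvr).1

lemma MonFeasible.exists_on_row {a b : ℝ × ℝ} (hab : MonFeasible F a b) {y : ℝ}
    (hy : y ∈ Icc a.2 b.2) : ∃ c : ℝ × ℝ, c.2 = y ∧ MonFeasible F c b := by
  obtain ⟨γ, hγc, hγF, hγm, rfl, rfl⟩ := monFeasible_iff.1 hab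
  obtain ⟨s, hs, hsy⟩ := intermediate_value_Icc zero_le_one hγc.snd hy
  exact ⟨γ s, hsy, monFeasible_apply_of_le hγc hγF hγm hs (right_mem_Icc.2 zero_le_one) hs.2⟩

end

theorem reach_eq_global_inter_pointers_general (F : Set (ℝ × ℝ)) (i j : ℝ)
    (h0i : 0 ≤ i) (hij : i < j)
    (u : ℝ × ℝ) (hu : u ∈ Rrow F i)
    (lp rp : ℝ × ℝ)
    (hlp : lp.2 = j ∧ MonFeasible F u lp ∧
      ∀ w : ℝ × ℝ, w.2 = j → MonFeasible F u w → lp.1 ≤ w.1)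
    (hrp : rp.2 = j ∧ MonFeasible F u rp ∧
      ∀ w : ℝ × ℝ, w.2 = j → MonFeasible F u w → w.1 ≤ rp.1) :
    ReachRow F j {u} = Rrow F j ∩ {w : ℝ × ℝ | lp.1 ≤ w.1 ∧ w.1 ≤ rp.1} := by
  obtain ⟨hui, u₀, hu₀, hu₀u⟩ := hu
  ext w
  simp only [Rrow, ReachRow, mem_inter_iff, mem_ofPred_eq, mem_singleton_iff, exists_eq_left]
  constructor
  · rintro ⟨hwj, huw⟩
    exact ⟨⟨hwj, u₀, hu₀, hu₀u.trans huw⟩, hlp.2.2 w hwj huw, hrp.2.2 w hwj huw⟩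
  · rintro ⟨⟨hwj, v₀, hv₀, hv₀w⟩, hlw, hwr⟩
    obtain ⟨u', hu'i, hu'w⟩ := hv₀w.exists_on_row (y := i) (by rw [hv₀.2, hwj]; exact ⟨h0i, hij.le⟩)
    exact ⟨hwj, hlp.2.1.of_between hrp.2.1 hu'w (hu'i.trans hui.symm) (hlp.1.trans hwj.symm)
      (hrp.1.trans hwj.symm) hlw hwr⟩

/-- for `0 ≤ i < j` and `u ∈ R(i)`, the set of points of row `j` reachable
from `u` equals `R(j)` intersected with the horizontal interval `[lp_j(u), rp_j(u)]`. -/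
theorem reach_eq_global_inter_pointers (F : Set (ℝ × ℝ)) (i j m : ℝ)
    (h0i : 0 ≤ i) (hij : i < j) (hjm : j ≤ m)
    (u : ℝ × ℝ) (hu : u ∈ Rrow F i)
    (lp rp : ℝ × ℝ)
    (hlp : lp.2 = j ∧ MonFeasible F u lp ∧
      ∀ w : ℝ × ℝ, w.2 = j → MonFeasible F u w → lp.1 ≤ w.1)
    (hrp : rp.2 = j ∧ MonFeasible F u rp ∧
      ∀ w : ℝ × ℝ, w.2 = j → MonFeasible F u w → w.1 ≤ rp.1) :
    ReachRow F j {u} = Rrow F j ∩ {w : ℝ × ℝ | lp.1 ≤ w.1 ∧ w.1 ≤ rp.1} :=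
  reach_eq_global_inter_pointers_general F i j h0i hij u hu lp rp hlp hrp
end

section
/- The Fréchet distance between two curves is at most their discrete Fréchet distance, and the difference between the discrete and continuous Fréchet distance of two polygonal curves is bounded by the length of the longest edge among the two curves. -/
open Set

/-- The polygonal curve with vertex sequence `p`, parametrized affinely on each `[i, i+1]`. -/
noncomputable def polyline {d : ℕ} (p : ℕ → EuclideanSpace ℝ (Fin d)) (t : ℝ) :
    EuclideanSpace ℝ (Fin d) :=
  (1 - Int.fract t) • p ⌊t⌋.toNat + Int.fract t • p (⌊t⌋.toNat + 1)

/-- A monotone reparametrization of `[0,1]` onto `[0,A]`. -/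
def ReparamTo (A : ℝ) (σ : ℝ → ℝ) : Prop :=
  ContinuousOn σ (Icc 0 1) ∧ MonotoneOn σ (Icc 0 1) ∧ σ 0 = 0 ∧ σ 1 = A

/-- The (continuous) Fréchet distance between curves `P : [0,A] → ℝ^d`, `Q : [0,B] → ℝ^d`. -/
noncomputable def frechetDist' {d : ℕ} (P Q : ℝ → EuclideanSpace ℝ (Fin d)) (A B : ℝ) : ℝ :=
  sInf {r : ℝ | ∃ σ τ : ℝ → ℝ, ReparamTo A σ ∧ ReparamTo B τ ∧
    ∀ t ∈ Icc (0:ℝ) 1, ‖P (σ t) - Q (τ t)‖ ≤ r}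

/-- A coupling between vertex index sets `{0..n}` and `{0..m}`: starts at `(0,0)`, ends at
`(n,m)`, and each step advances one or both indices by one. -/
def IsCoupling (n m K : ℕ) (c : ℕ → ℕ × ℕ) : Prop :=
  c 0 = (0, 0) ∧ c K = (n, m) ∧
  ∀ k < K, ((c (k+1)).1 = (c k).1 ∨ (c (k+1)).1 = (c k).1 + 1) ∧
           ((c (k+1)).2 = (c k).2 ∨ (c (k+1)).2 = (c k).2 + 1) ∧ c (k+1) ≠ c k

/-- The discrete Fréchet distance between the vertex sequences `p` (of length `n`)
and `q` (of length `m`). -/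
noncomputable def discreteFrechet {d : ℕ} (p q : ℕ → EuclideanSpace ℝ (Fin d))
    (n m : ℕ) : ℝ :=
  sInf {r : ℝ | ∃ K : ℕ, ∃ c : ℕ → ℕ × ℕ, IsCoupling n m K c ∧
    ∀ k ≤ K, ‖p (c k).1 - q (c k).2‖ ≤ r}

/-!
A coupling of the vertices becomes a pair of reparametrizations traversing one coupled step per
unit of time; on each step both curves move affinely, so the pointwise distance is a convex
combination of coupled vertex distances.
Conversely, given reparametrizations `σ, τ` within distance `r`, pick times `T i`, `U j` at which
`σ` reaches vertex `i` and `τ` reaches vertex `j`. Merging these two sorted sequences gives a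
coupling in which, for each coupled pair `(i, j)`, at `t = max (T i) (U j)` one curve sits at
its vertex while the other lies on the edge leaving its vertex, so `‖p i - q j‖ ≤ r + L`.
-/

open AffineMap

section Interp

variable {E : Type*} [AddCommGroup E] [Module ℝ E]

noncomputable def interp (a : ℕ → E) (t : ℝ) : E :=
  (1 - Int.fract t) • a ⌊t⌋.toNat + Int.fract t • a (⌊t⌋.toNat + 1)

@[simp]
theorem interp_natCast (a : ℕ → E) (k : ℕ) : interp a k = a k := by
  simp [interp]

theorem interp_eq_lineMap (a : ℕ → E) {k : ℕ} {t : ℝ} (ht : t ∈ Icc (k : ℝ) (k + 1)) :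
    interp a t = lineMap (a k) (a (k + 1)) (t - k) := by
  rcases ht.2.lt_or_eq with h | rfl
  · have hfloor : ⌊t⌋ = k := Int.floor_eq_iff.2 ⟨mod_cast ht.1, mod_cast h⟩
    simp [interp, lineMap_apply_module, Int.fract, hfloor]
  · simpa [lineMap_apply_module] using interp_natCast a (k + 1)

theorem interp_sub (a b : ℕ → E) (t : ℝ) : interp a t - interp b t = interp (a - b) t := by
  simp only [interp, Pi.sub_apply, smul_sub]
  abel

theorem Convex.interp_mem {s : Set E} (hs : Convex ℝ s) {a : ℕ → E} (ha : ∀ k, a k ∈ s)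
    (t : ℝ) : interp a t ∈ s :=
  hs (ha _) (ha _) (sub_nonneg.2 (Int.fract_lt_one t).le) (Int.fract_nonneg t) (sub_add_cancel _ _)

theorem interp_interp_natCast {a : ℕ → ℕ} (ha : ∀ k, a (k + 1) = a k ∨ a (k + 1) = a k + 1)
    (p : ℕ → E) (t : ℝ) : interp p (interp (fun k => (a k : ℝ)) t) = interp (p ∘ a) t := by
  set k := ⌊t⌋.toNat
  set f := Int.fract t
  have hf : interp (p ∘ a) t = (1 - f) • p (a k) + f • p (a (k + 1)) := rfl
  rcases ha k with h | h
  · have : interp (fun k => (a k : ℝ)) t = a k := by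
      change (1 - f) * (a k : ℝ) + f * a (k + 1) = a k
      rw [h]; ring
    rw [this, interp_natCast, hf, h, ← add_smul, sub_add_cancel, one_smul]
  · have hinner : interp (fun k => (a k : ℝ)) t = (a k : ℤ) + f := by
      change (1 - f) * (a k : ℝ) + f * a (k + 1) = _
      rw [h]; push_cast; ring
    have hfloor : ⌊((a k : ℤ) : ℝ) + f⌋ = a k := by
      rw [Int.floor_intCast_add, Int.floor_fract, add_zero]
    rw [hinner, hf, h, interp, hfloor, Int.fract_intCast_add, Int.fract_fract, Int.toNat_natCast]

end Interp

theorem Icc_zero_natCast_succ (N : ℕ) :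
    Icc (0 : ℝ) ((N + 1 : ℕ) : ℝ) = Icc (0 : ℝ) N ∪ Icc (N : ℝ) (N + 1) := by
  rw [Nat.cast_succ, Icc_union_Icc_eq_Icc (Nat.cast_nonneg N) (by linarith)]

section Normed

variable {E : Type*} [NormedAddCommGroup E] [NormedSpace ℝ E]

theorem continuousOn_interp (a : ℕ → E) (N : ℕ) : ContinuousOn (interp a) (Icc 0 N) := by
  induction N with
  | zero => simp
  | succ N ih =>
    have hpiece : ContinuousOn (interp a) (Icc (N : ℝ) (N + 1)) := by
      refine ContinuousOn.congr (f := fun t : ℝ => lineMap (a N) (a (N + 1)) (t - N)) ?_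
        fun t ht => interp_eq_lineMap a ht
      simp only [lineMap_apply_module]
      fun_prop
    rw [Icc_zero_natCast_succ]
    exact ih.union_of_isClosed hpiece isClosed_Icc isClosed_Icc

theorem norm_interp_le {a : ℕ → E} {r : ℝ} (ha : ∀ k, ‖a k‖ ≤ r) (t : ℝ) : ‖interp a t‖ ≤ r :=
  mem_closedBall_zero_iff.1 <|
    (convex_closedBall 0 r).interp_mem (fun k => mem_closedBall_zero_iff.2 (ha k)) t

theorem norm_interp_sub_le (a : ℕ → E) {k : ℕ} {t : ℝ} (ht : t ∈ Icc (k : ℝ) (k + 1)) :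
    ‖interp a t - a k‖ ≤ ‖a (k + 1) - a k‖ := by
  rw [interp_eq_lineMap a ht, ← dist_eq_norm, dist_lineMap_left, dist_comm, dist_eq_norm,
    Real.norm_of_nonneg (sub_nonneg.2 ht.1)]
  exact mul_le_of_le_one_left (norm_nonneg _) (by linarith [ht.2])

end Normed

theorem monotoneOn_interp {a : ℕ → ℝ} (ha : Monotone a) (N : ℕ) :
    MonotoneOn (interp a) (Icc 0 N) := by
  induction N with
  | zero => simp
  | succ N ih =>
    have hpiece : MonotoneOn (interp a) (Icc (N : ℝ) (N + 1)) := by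
      intro s hs t ht hst
      rw [interp_eq_lineMap a hs, interp_eq_lineMap a ht, lineMap_apply_module',
        lineMap_apply_module', smul_eq_mul, smul_eq_mul]
      have := sub_nonneg.2 (ha N.le_succ)
      gcongr
    rw [Icc_zero_natCast_succ]
    exact ih.union_right hpiece ⟨right_mem_Icc.2 (Nat.cast_nonneg N), fun _ h => h.2⟩
      ⟨left_mem_Icc.2 (by linarith), fun _ h => h.1⟩

theorem reparamTo_interp {a : ℕ → ℝ} (ha : Monotone a) {K : ℕ} {A : ℝ} (h0 : a 0 = 0)
    (hK : a K = A) : ReparamTo A (fun t => interp a (K * t)) := by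
  have hmaps : MapsTo (fun t : ℝ => K * t) (Icc 0 1) (Icc 0 K) := fun t ht =>
    ⟨by have := ht.1; positivity, mul_le_of_le_one_right (Nat.cast_nonneg K) ht.2⟩
  refine ⟨(continuousOn_interp a K).comp (by fun_prop) hmaps,
    (monotoneOn_interp ha K).comp
      (fun _ _ _ _ hst => mul_le_mul_of_nonneg_left hst (Nat.cast_nonneg K)) hmaps,
    ?_, ?_⟩
  · simpa using (interp_natCast a 0).trans h0
  · simpa using hK

theorem ReparamTo.exists_hittingTimes {σ : ℝ → ℝ} {n : ℕ} (hσ : ReparamTo n σ) :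
    ∃ T : ℕ → ℝ, Monotone T ∧ T 0 = 0 ∧ T (n + 1) = 1 ∧ (∀ i, T i ∈ Icc 0 1) ∧
      ∀ i, σ (T i) = (min i n : ℕ) := by
  obtain ⟨hcont, hmono, h0, h1⟩ := hσ
  have hex : ∀ i : ℕ, ∃ t ∈ Icc (0 : ℝ) 1,
      σ t = (min i n : ℕ) ∧ (i = 0 → t = 0) ∧ (n < i → t = 1) := by
    intro i
    rcases Nat.eq_zero_or_pos i with rfl | hi
    · exact ⟨0, left_mem_Icc.2 zero_le_one, by simp [h0], fun _ => rfl, by omega⟩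
    rcases le_or_gt i n with hin | hni
    · have hmem : ((min i n : ℕ) : ℝ) ∈ Icc (σ 0) (σ 1) := by
        rw [h0, h1]
        exact ⟨Nat.cast_nonneg _, Nat.cast_le.2 (min_le_right i n)⟩
      obtain ⟨t, ht, hσt⟩ := intermediate_value_Icc zero_le_one hcont hmem
      exact ⟨t, ht, hσt, by omega, by omega⟩
    · exact ⟨1, right_mem_Icc.2 zero_le_one, by simp [h1, hni.le], by omega, fun _ => rfl⟩
  choose T hT01 hσT hT0 hT1 using hex
  refine ⟨T, fun i j hij => ?_, hT0 0 rfl, hT1 (n + 1) n.lt_succ_self, hT01, hσT⟩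
  rcases le_or_gt j n with hjn | hnj
  · by_contra! hlt
    have := hmono (hT01 j) (hT01 i) hlt.le
    rw [hσT, hσT, Nat.cast_le] at this
    obtain rfl : i = j := by omega
    exact lt_irrefl _ hlt
  · exact hT1 j hnj ▸ (hT01 i).2

theorem IsCoupling.snoc {i j i' j' K : ℕ} {c : ℕ → ℕ × ℕ} (hc : IsCoupling i j K c)
    (hi : i' = i ∨ i' = i + 1) (hj : j' = j ∨ j' = j + 1) (hne : (i', j') ≠ (i, j)) :
    IsCoupling i' j' (K + 1) (fun k => if k ≤ K then c k else (i', j')) := by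
  obtain ⟨h0, hK, hstep⟩ := hc
  refine ⟨by simp [h0], by simp, fun k hk => ?_⟩
  rcases (Nat.lt_succ_iff.1 hk).lt_or_eq with hk | rfl
  · simpa [hk.le, Nat.succ_le_of_lt hk] using hstep k hk
  · simp only [le_refl, Nat.not_succ_le_self, if_true, if_false, hK]
    exact ⟨hi, hj, hne⟩

theorem exists_isCoupling_within (G : ℕ → ℕ → Prop) (h0 : G 0 0)
    (hpred : ∀ i j, G i j → 0 < i + j → (0 < i ∧ G (i - 1) j) ∨ (0 < j ∧ G i (j - 1)))
    {i j : ℕ} (hij : G i j) :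
    ∃ K c, IsCoupling i j K c ∧ ∀ k ≤ K, G (c k).1 (c k).2 := by
  induction hs : i + j generalizing i j with
  | zero =>
    obtain ⟨rfl, rfl⟩ : i = 0 ∧ j = 0 := by omega
    exact ⟨0, fun _ => (0, 0), ⟨rfl, rfl, by simp⟩, fun _ _ => h0⟩
  | succ s ih =>
    have extend : ∀ {i' j'}, G i' j' → i' + j' = s → (i = i' ∨ i = i' + 1) →
        (j = j' ∨ j = j' + 1) → (i, j) ≠ (i', j') →
        ∃ K c, IsCoupling i j K c ∧ ∀ k ≤ K, G (c k).1 (c k).2 := by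
      intro i' j' hG hs' hi hj hne
      obtain ⟨K, c, hc, hcG⟩ := ih hG hs'
      refine ⟨K + 1, _, hc.snoc hi hj hne, fun k hk => ?_⟩
      by_cases hkK : k ≤ K
      · simpa [hkK] using hcG k hkK
      · simpa [hkK] using hij
    rcases hpred i j hij (by omega) with ⟨hi, hG⟩ | ⟨hj, hG⟩
    · exact extend hG (by omega) (by omega) (Or.inl rfl) (by simp only [ne_eq, Prod.mk.injEq]; omega)
    · exact extend hG (by omega) (Or.inl rfl) (by omega) (by simp only [ne_eq, Prod.mk.injEq]; omega)

theorem exists_isCoupling (n m : ℕ) : ∃ K c, IsCoupling n m K c := by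
  obtain ⟨K, c, hc, -⟩ := exists_isCoupling_within (fun _ _ => True) trivial
    (fun i j _ hij => by simp only [and_true]; omega) (i := n) (j := m) trivial
  exact ⟨K, c, hc⟩

/-- Merging two sorted sequences: the parameter intervals `[T i, T (i + 1)]` and
`[U j, U (j + 1)]` of coupled indices always overlap. -/
theorem exists_isCoupling_of_monotone {T U : ℕ → ℝ} (hT : Monotone T) (hU : Monotone U)
    (h0 : T 0 = U 0) {n m : ℕ} (hn : U m ≤ T (n + 1)) (hm : T n ≤ U (m + 1)) :
    ∃ K c, IsCoupling n m K c ∧ ∀ k ≤ K, (c k).1 ≤ n ∧ (c k).2 ≤ m ∧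
      T (c k).1 ≤ U ((c k).2 + 1) ∧ U (c k).2 ≤ T ((c k).1 + 1) := by
  refine exists_isCoupling_within (fun i j => i ≤ n ∧ j ≤ m ∧ T i ≤ U (j + 1) ∧ U j ≤ T (i + 1))
    ⟨Nat.zero_le _, Nat.zero_le _, h0 ▸ hU (Nat.zero_le _), h0 ▸ hT (Nat.zero_le _)⟩ ?_
    ⟨le_rfl, le_rfl, hm, hn⟩
  rintro i j ⟨hin, hjm, hTU, hUT⟩ hij
  by_cases h : 0 < i ∧ (j = 0 ∨ U j ≤ T i)
  · refine Or.inl ⟨h.1, by omega, hjm, (hT (i.sub_le 1)).trans hTU, ?_⟩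
    rw [Nat.sub_add_cancel h.1]
    rcases h.2 with rfl | h
    · exact h0 ▸ hT (Nat.zero_le i)
    · exact h
  · push Not at h
    have hj : 0 < j := by
      rcases Nat.eq_zero_or_pos i with rfl | hi
      · omega
      · exact Nat.pos_of_ne_zero (h hi).1
    refine Or.inr ⟨hj, hin, by omega, ?_, (hU (j.sub_le 1)).trans hUT⟩
    rw [Nat.sub_add_cancel hj]
    rcases Nat.eq_zero_or_pos i with rfl | hi
    · exact h0 ▸ hU (Nat.zero_le j)
    · exact (h hi).2.le

theorem IsCoupling.clamp_succ {n m K : ℕ} {c : ℕ → ℕ × ℕ} (hc : IsCoupling n m K c) (k : ℕ) :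
    ((c (min (k + 1) K)).1 = (c (min k K)).1 ∨ (c (min (k + 1) K)).1 = (c (min k K)).1 + 1) ∧
    ((c (min (k + 1) K)).2 = (c (min k K)).2 ∨ (c (min (k + 1) K)).2 = (c (min k K)).2 + 1) := by
  rcases lt_or_ge k K with hk | hk
  · rw [min_eq_left (Nat.succ_le_of_lt hk), min_eq_left hk.le]
    exact ⟨(hc.2.2 k hk).1, (hc.2.2 k hk).2.1⟩
  · rw [min_eq_right hk, min_eq_right (hk.trans k.le_succ)]
    exact ⟨Or.inl rfl, Or.inl rfl⟩

section Normed

variable {E : Type*} [NormedAddCommGroup E] [NormedSpace ℝ E]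

theorem exists_reparamTo_of_isCoupling (p q : ℕ → E) {n m K : ℕ} {c : ℕ → ℕ × ℕ} {r : ℝ}
    (hc : IsCoupling n m K c) (hr : ∀ k ≤ K, ‖p (c k).1 - q (c k).2‖ ≤ r) :
    ∃ σ τ : ℝ → ℝ, ReparamTo n σ ∧ ReparamTo m τ ∧
      ∀ t ∈ Icc (0 : ℝ) 1, ‖interp p (σ t) - interp q (τ t)‖ ≤ r := by
  set a : ℕ → ℕ := fun k => (c (min k K)).1
  set b : ℕ → ℕ := fun k => (c (min k K)).2
  have ha : ∀ k, a (k + 1) = a k ∨ a (k + 1) = a k + 1 := fun k => (hc.clamp_succ k).1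
  have hb : ∀ k, b (k + 1) = b k ∨ b (k + 1) = b k + 1 := fun k => (hc.clamp_succ k).2
  have hmono : ∀ {a : ℕ → ℕ}, (∀ k, a (k + 1) = a k ∨ a (k + 1) = a k + 1) →
      Monotone fun k => (a k : ℝ) := fun ha =>
    monotone_nat_of_le_succ fun k => by rcases ha k with h | h <;> simp [h]
  refine ⟨fun t => interp (fun k => (a k : ℝ)) (K * t),
    fun t => interp (fun k => (b k : ℝ)) (K * t),
    reparamTo_interp (hmono ha) (by simp [a, hc.1]) (by simp [a, hc.2.1]),
    reparamTo_interp (hmono hb) (by simp [b, hc.1]) (by simp [b, hc.2.1]), fun t _ => ?_⟩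
  rw [interp_interp_natCast ha, interp_interp_natCast hb, interp_sub]
  exact norm_interp_le (fun k => hr _ (min_le_right k K)) _

theorem norm_vertex_sub_vertex_le {p q : ℕ → E} {m : ℕ} {L r : ℝ} (hL : 0 ≤ L)
    (hLq : ∀ j < m, ‖q (j + 1) - q j‖ ≤ L) {σ τ : ℝ → ℝ} (hτ : MonotoneOn τ (Icc 0 1))
    (hb : ∀ t ∈ Icc (0 : ℝ) 1, ‖interp p (σ t) - interp q (τ t)‖ ≤ r)
    {i j : ℕ} {t u₀ u₁ : ℝ} (ht : t ∈ Icc (0 : ℝ) 1) (hu₀ : u₀ ∈ Icc (0 : ℝ) 1)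
    (hu₁ : u₁ ∈ Icc (0 : ℝ) 1) (hσt : σ t = i) (hτu₀ : τ u₀ = j)
    (hτu₁ : τ u₁ = (min (j + 1) m : ℕ)) (h₀ : u₀ ≤ t) (h₁ : t ≤ u₁) :
    ‖p i - q j‖ ≤ r + L := by
  have hlo : (j : ℝ) ≤ τ t := hτu₀ ▸ hτ hu₀ ht h₀
  have hhi : τ t ≤ (min (j + 1) m : ℕ) := hτu₁ ▸ hτ ht hu₁ h₁
  have hedge : ‖interp q (τ t) - q j‖ ≤ L := by
    rcases lt_or_ge j m with hjm | hmj
    · refine (norm_interp_sub_le q ⟨hlo, hhi.trans ?_⟩).trans (hLq j hjm)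
      exact_mod_cast min_le_left _ _
    · have : τ t = j := le_antisymm (hhi.trans (mod_cast (min_le_right _ _).trans hmj)) hlo
      simpa [this] using hL
  calc ‖p i - q j‖ ≤ ‖p i - interp q (τ t)‖ + ‖interp q (τ t) - q j‖ :=
        norm_sub_le_norm_sub_add_norm_sub _ _ _
    _ ≤ r + L := add_le_add (by simpa [hσt] using hb t ht) hedge

theorem exists_isCoupling_of_reparamTo {p q : ℕ → E} {n m : ℕ} {L r : ℝ} (hL : 0 ≤ L)
    (hLp : ∀ i < n, ‖p (i + 1) - p i‖ ≤ L) (hLq : ∀ j < m, ‖q (j + 1) - q j‖ ≤ L)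
    {σ τ : ℝ → ℝ} (hσ : ReparamTo n σ) (hτ : ReparamTo m τ)
    (hb : ∀ t ∈ Icc (0 : ℝ) 1, ‖interp p (σ t) - interp q (τ t)‖ ≤ r) :
    ∃ K c, IsCoupling n m K c ∧ ∀ k ≤ K, ‖p (c k).1 - q (c k).2‖ ≤ r + L := by
  obtain ⟨T, hT, hT0, hTn, hT01, hσT⟩ := hσ.exists_hittingTimes
  obtain ⟨U, hU, hU0, hUm, hU01, hτU⟩ := hτ.exists_hittingTimes
  obtain ⟨K, c, hc, hcG⟩ := exists_isCoupling_of_monotone hT hU (hT0.trans hU0.symm)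
    (hTn ▸ (hU01 m).2) (hUm ▸ (hT01 n).2)
  refine ⟨K, c, hc, fun k hk => ?_⟩
  obtain ⟨hi, hj, hTU, hUT⟩ := hcG k hk
  have hσi : σ (T (c k).1) = (c k).1 := by rw [hσT, min_eq_left hi]
  have hτj : τ (U (c k).2) = (c k).2 := by rw [hτU, min_eq_left hj]
  rcases le_total (U (c k).2) (T (c k).1) with h | h
  · exact norm_vertex_sub_vertex_le hL hLq hτ.2.1 hb (hT01 _) (hU01 _) (hU01 _) hσi hτj
      (hτU _) h hTU
  · rw [norm_sub_rev]
    refine norm_vertex_sub_vertex_le hL hLp hσ.2.1 (fun t ht => ?_) (hU01 _) (hT01 _) (hT01 _)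
      hτj hσi (hσT _) h hUT
    rw [norm_sub_rev]
    exact hb t ht

end Normed

theorem frechetDist'_le {d : ℕ} {P Q : ℝ → EuclideanSpace ℝ (Fin d)} {A B r : ℝ}
    {σ τ : ℝ → ℝ} (hσ : ReparamTo A σ) (hτ : ReparamTo B τ)
    (h : ∀ t ∈ Icc (0 : ℝ) 1, ‖P (σ t) - Q (τ t)‖ ≤ r) : frechetDist' P Q A B ≤ r :=
  csInf_le ⟨0, fun _ ⟨_, _, _, _, h⟩ => (norm_nonneg _).trans (h 0 (left_mem_Icc.2 zero_le_one))⟩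
    ⟨σ, τ, hσ, hτ, h⟩

theorem discreteFrechet_le {d : ℕ} {p q : ℕ → EuclideanSpace ℝ (Fin d)} {n m K : ℕ}
    {c : ℕ → ℕ × ℕ} {r : ℝ} (hc : IsCoupling n m K c)
    (h : ∀ k ≤ K, ‖p (c k).1 - q (c k).2‖ ≤ r) : discreteFrechet p q n m ≤ r :=
  csInf_le ⟨0, fun _ ⟨_, _, _, h⟩ => (norm_nonneg _).trans (h 0 (Nat.zero_le _))⟩ ⟨K, c, hc, h⟩

theorem discrete_frechet_bounds_general {d : ℕ} (p q : ℕ → EuclideanSpace ℝ (Fin d))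
    (n m : ℕ) (hm : 1 ≤ m) (L : ℝ)
    (hLp : ∀ i < n, ‖p (i+1) - p i‖ ≤ L) (hLq : ∀ j < m, ‖q (j+1) - q j‖ ≤ L) :
    frechetDist' (polyline p) (polyline q) n m ≤ discreteFrechet p q n m ∧
    discreteFrechet p q n m ≤ frechetDist' (polyline p) (polyline q) n m + L := by
  have hL : 0 ≤ L := (norm_nonneg _).trans (hLq 0 hm)
  obtain ⟨K₀, c₀, hc₀⟩ := exists_isCoupling n m
  obtain ⟨r₀, hr₀⟩ := ((finite_Iic K₀).image fun k => ‖p (c₀ k).1 - q (c₀ k).2‖).bddAbove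
  have hcr₀ : ∀ k ≤ K₀, ‖p (c₀ k).1 - q (c₀ k).2‖ ≤ r₀ := fun k hk => hr₀ (mem_image_of_mem _ hk)
  refine ⟨le_csInf ⟨r₀, K₀, c₀, hc₀, hcr₀⟩ ?_, sub_le_iff_le_add.1 (le_csInf ?_ ?_)⟩
  · rintro r ⟨K, c, hc, hcr⟩
    obtain ⟨σ, τ, hσ, hτ, hb⟩ := exists_reparamTo_of_isCoupling p q hc hcr
    exact frechetDist'_le hσ hτ hb
  · obtain ⟨σ, τ, hσ, hτ, hb⟩ := exists_reparamTo_of_isCoupling p q hc₀ hcr₀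
    exact ⟨r₀, σ, τ, hσ, hτ, hb⟩
  · rintro r ⟨σ, τ, hσ, hτ, hb⟩
    obtain ⟨K, c, hc, hcr⟩ := exists_isCoupling_of_reparamTo hL hLp hLq hσ hτ hb
    exact sub_le_iff_le_add.2 (discreteFrechet_le hc hcr)

/-- the Fréchet distance is at most the discrete Fréchet distance, and the
discrete Fréchet distance exceeds the continuous one by at most the length `L` of the
longest edge of the two polygonal curves. -/
theorem discrete_frechet_bounds {d : ℕ} (p q : ℕ → EuclideanSpace ℝ (Fin d))
    (n m : ℕ) (hn : 1 ≤ n) (hm : 1 ≤ m) (L : ℝ)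
    (hLp : ∀ i < n, ‖p (i+1) - p i‖ ≤ L) (hLq : ∀ j < m, ‖q (j+1) - q j‖ ≤ L) :
    frechetDist' (polyline p) (polyline q) n m ≤ discreteFrechet p q n m ∧
    discreteFrechet p q n m ≤ frechetDist' (polyline p) (polyline q) n m + L :=
  discrete_frechet_bounds_general p q n m hm L hLp hLq
end

section
/- For a set of m curves f₁,…,f_m, the Fréchet distance of the set satisfies distSetF(f₁,…,f_m) ≤ min over i of max over pairs j < k of (d_{ij} + d_{ik}), where d_{ij} = distF(f_i, f_j); hence computing all pairwise Fréchet distances yields a 2-approximation of the Fréchet distance of the set. -/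
open Set

/-- A monotone reparametrization of `[0,1]`: continuous, non-decreasing, surjective onto `[0,1]`. -/
def Reparam (σ : ℝ → ℝ) : Prop :=
  ContinuousOn σ (Icc 0 1) ∧ MonotoneOn σ (Icc 0 1) ∧
    MapsTo σ (Icc 0 1) (Icc 0 1) ∧ SurjOn σ (Icc 0 1) (Icc 0 1)

/-- The Fréchet distance between two curves `α β : [0,1] → ℝ^d`. -/
noncomputable def frechetDist {d : ℕ} (α β : ℝ → EuclideanSpace ℝ (Fin d)) : ℝ :=
  sInf {r : ℝ | ∃ σ τ : ℝ → ℝ, Reparam σ ∧ Reparam τ ∧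
    ∀ t ∈ Icc (0:ℝ) 1, ‖α (σ t) - β (τ t)‖ ≤ r}

/-- The Fréchet distance of a set of `m` curves: the minimum, over simultaneous monotone
traversals, of the largest pairwise distance occurring at any time. -/
noncomputable def frechetSetDist {d m : ℕ}
    (f : Fin m → (ℝ → EuclideanSpace ℝ (Fin d))) : ℝ :=
  sInf {r : ℝ | ∃ α : Fin m → (ℝ → ℝ), (∀ i, Reparam (α i)) ∧
    ∀ t ∈ Icc (0:ℝ) 1, ∀ j k : Fin m, ‖f j (α j t) - f k (α k t)‖ ≤ r}

noncomputable def clampR (x : ℝ) : ℝ := max 0 (min 1 x)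

lemma clampR_mem (x : ℝ) : clampR x ∈ Icc (0:ℝ) 1 :=
  ⟨le_max_left _ _, max_le zero_le_one (min_le_left _ _)⟩

lemma clampR_of_mem {x : ℝ} (hx : x ∈ Icc (0:ℝ) 1) : clampR x = x := by
  simp [clampR, min_eq_right hx.2, max_eq_right hx.1]

lemma clampR_continuous : Continuous clampR :=
  continuous_const.max (continuous_const.min continuous_id)

lemma clampR_monotone : Monotone clampR := fun a b h =>
  max_le_max le_rfl (min_le_min le_rfl h)

lemma Reparam.zero {σ : ℝ → ℝ} (hσ : Reparam σ) : σ 0 = 0 := by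
  obtain ⟨u, hu, hu0⟩ := hσ.2.2.2 (show (0:ℝ) ∈ Icc (0:ℝ) 1 by simp)
  have h1 : σ 0 ≤ σ u := hσ.2.1 (by simp) hu hu.1
  have h2 : (0:ℝ) ≤ σ 0 := (hσ.2.2.1 (by simp)).1
  have := hu0
  nlinarith [hu0]

lemma Reparam.one {σ : ℝ → ℝ} (hσ : Reparam σ) : σ 1 = 1 := by
  obtain ⟨u, hu, hu1⟩ := hσ.2.2.2 (show (1:ℝ) ∈ Icc (0:ℝ) 1 by simp)
  have h1 : σ u ≤ σ 1 := hσ.2.1 hu (by simp) hu.2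
  have h2 : σ 1 ≤ 1 := (hσ.2.2.1 (by simp)).2
  nlinarith [hu1]

/-- The "pseudo-inverse" package for a reparametrization. -/
lemma reparam_pkg {σ : ℝ → ℝ} (hσ : Reparam σ) :
    ∃ ψ : ℝ → ℝ, Continuous ψ ∧ Monotone ψ ∧
      (∀ s1 s2, s1 ≤ s2 → ψ s2 - ψ s1 ≤ s2 - s1) ∧
      ψ 0 = 0 ∧ ψ 2 = 1 ∧
      (∀ s, σ (clampR (ψ s)) = s - ψ s) ∧
      (∀ x, ψ (x + σ (clampR x)) = x) := by
  set σc : ℝ → ℝ := fun x => σ (clampR x) with hσc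
  have hσc_cont : Continuous σc :=
    hσ.1.comp_continuous clampR_continuous (fun x => clampR_mem x)
  have hσc_mono : Monotone σc := fun a b h =>
    hσ.2.1 (clampR_mem a) (clampR_mem b) (clampR_monotone h)
  have hσc_mem : ∀ x, σc x ∈ Icc (0:ℝ) 1 := fun x => hσ.2.2.1 (clampR_mem x)
  set H : ℝ → ℝ := fun x => x + σc x with hH
  have hH_cont : Continuous H := continuous_id.add hσc_cont
  have hH_mono : StrictMono H := fun a b h =>
    add_lt_add_of_lt_of_le h (hσc_mono h.le)
  have hH_surj : Function.Surjective H := by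
    intro y
    have h1 : H (y - 2) ≤ y := by
      have := (hσc_mem (y - 2)).2; simp only [hH]; linarith
    have h2 : y ≤ H y := by
      have := (hσc_mem y).1; simp only [hH]; linarith
    obtain ⟨x, _, hx⟩ := intermediate_value_Icc (by linarith : y - 2 ≤ y)
      hH_cont.continuousOn ⟨h1, h2⟩
    exact ⟨x, hx⟩
  set e := StrictMono.orderIsoOfSurjective H hH_mono hH_surj with he
  have hcoe : ∀ x, e x = H x := fun x => rfl
  refine ⟨fun s => e.symm s, ?_, fun a b h => e.symm.monotone h, ?_, ?_, ?_, ?_, ?_⟩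
  · exact e.symm.continuous
  · intro s1 s2 h
    have h1 : H (e.symm s1) = s1 := by rw [← hcoe]; exact e.apply_symm_apply s1
    have h2 : H (e.symm s2) = s2 := by rw [← hcoe]; exact e.apply_symm_apply s2
    have hm : σc (e.symm s1) ≤ σc (e.symm s2) := hσc_mono (e.symm.monotone h)
    simp only [hH] at h1 h2
    linarith
  · have : H 0 = 0 := by
      simp only [hH, hσc]
      rw [clampR_of_mem (by simp), hσ.zero]; ring
    show e.symm 0 = 0
    nth_rewrite 1 [← this]
    rw [← hcoe]
    exact e.symm_apply_apply 0
  · have : H 1 = 2 := by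
      simp only [hH, hσc]
      rw [clampR_of_mem (by simp), hσ.one]; ring
    show e.symm 2 = 1
    rw [← this, ← hcoe]
    exact e.symm_apply_apply 1
  · intro s
    have h1 : H (e.symm s) = s := by rw [← hcoe]; exact e.apply_symm_apply s
    simp only [hH] at h1
    simp only [hσc] at h1 ⊢
    linarith
  · intro x
    have : H x = x + σ (clampR x) := rfl
    show e.symm (x + σ (clampR x)) = x
    rw [← this, ← hcoe]
    exact e.symm_apply_apply x

lemma pairing (Y Y' : ℝ → ℝ) (hYc : Continuous Y) (hY'c : Continuous Y')
    (hYm : Monotone Y) (hY'm : Monotone Y')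
    (hY0 : Y 0 = 0) (hY2 : Y 2 = 1) (hY'0 : Y' 0 = 0) (hY'2 : Y' 2 = 1) :
    ∃ S : ℝ → ℝ, MonotoneOn S (Icc 0 4) ∧
      (∀ t1 ∈ Icc (0:ℝ) 4, ∀ t2 ∈ Icc (0:ℝ) 4, t1 ≤ t2 → t1 - S t1 ≤ t2 - S t2) ∧
      ContinuousOn S (Icc 0 4) ∧ S 0 = 0 ∧ S 4 = 2 ∧
      (∀ t ∈ Icc (0:ℝ) 4, S t ∈ Icc (max 0 (t-2)) (min 2 t)) ∧
      (∀ t ∈ Icc (0:ℝ) 4, Y (S t) = Y' (t - S t)) := by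
  set Sol : ℝ → Set ℝ :=
    fun t => {s | s ∈ Icc (max 0 (t-2)) (min 2 t) ∧ Y s = Y' (t - s)} with hSol
  set S : ℝ → ℝ := fun t => sInf (Sol t) with hS
  have hbdd : ∀ t, BddBelow (Sol t) := fun t =>
    ⟨max 0 (t-2), fun s hs => hs.1.1⟩
  have hclosed : ∀ t, IsClosed (Sol t) := by
    intro t
    have : Sol t = Icc (max 0 (t-2)) (min 2 t) ∩ {s | Y s = Y' (t - s)} := by
      ext s; simp [hSol]
    rw [this]
    exact isClosed_Icc.inter
      (isClosed_eq hYc (hY'c.comp (continuous_const.sub continuous_id)))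
  have hne : ∀ t ∈ Icc (0:ℝ) 4, (Sol t).Nonempty := by
    rintro t ⟨ht0, ht4⟩
    set g : ℝ → ℝ := fun s => Y s - Y' (t - s) with hg
    have hgc : ContinuousOn g (Icc (max 0 (t-2)) (min 2 t)) :=
      (hYc.sub (hY'c.comp (continuous_const.sub continuous_id))).continuousOn
    have hlr : max 0 (t-2) ≤ min 2 t := by
      rcases le_total t 2 with h | h
      · rw [max_eq_left (by linarith), min_eq_right h]; exact ht0
      · rw [max_eq_right (by linarith), min_eq_left h]; linarith
    have hgl : g (max 0 (t-2)) ≤ 0 := by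
      rcases le_total t 2 with h | h
      · rw [max_eq_left (by linarith)]
        have h1 : (0:ℝ) ≤ Y' t := by rw [← hY'0]; exact hY'm ht0
        simp only [hg, hY0, sub_zero]; linarith
      · rw [max_eq_right (by linarith)]
        have h1 : Y (t-2) ≤ 1 := by rw [← hY2]; exact hYm (by linarith)
        have h2 : Y' (t - (t-2)) = 1 := by norm_num [hY'2]
        simp only [hg]; linarith
    have hgr : 0 ≤ g (min 2 t) := by
      rcases le_total t 2 with h | h
      · rw [min_eq_right h]
        have h1 : (0:ℝ) ≤ Y t := by rw [← hY0]; exact hYm ht0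
        simp only [hg, sub_self, hY'0]; linarith
      · rw [min_eq_left h]
        have h1 : Y' (t - 2) ≤ 1 := by rw [← hY'2]; exact hY'm (by linarith)
        simp only [hg, hY2]; linarith
    obtain ⟨s, hs, hgs⟩ := intermediate_value_Icc hlr hgc ⟨hgl, hgr⟩
    exact ⟨s, hs, by simpa [hg, sub_eq_zero] using hgs⟩
  have hmem : ∀ t ∈ Icc (0:ℝ) 4, S t ∈ Sol t := fun t ht =>
    (hclosed t).csInf_mem (hne t ht) (hbdd t)
  have hmin : ∀ t, ∀ s ∈ Sol t, S t ≤ s := fun t s hs => csInf_le (hbdd t) hs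
  have hsqueeze : ∀ (F : ℝ → ℝ), Monotone F → ∀ a b x c, a ≤ x → x ≤ b →
      F a = c → F b = c → F x = c := by
    intro F hF a b x c hax hxb ha hb
    have h1 : F x ≤ F b := hF hxb
    have h2 : F a ≤ F x := hF hax
    rw [hb] at h1; rw [ha] at h2; linarith
  have hmono : MonotoneOn S (Icc 0 4) := by
    rintro t1 ht1 t2 ht2 h12
    by_contra hcon
    push_neg at hcon
    obtain ⟨⟨hs1l, hs1r⟩, he1⟩ := hmem t1 ht1
    obtain ⟨⟨hs2l, hs2r⟩, he2⟩ := hmem t2 ht2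
    set s1 := S t1; set s2 := S t2
    have hs2lt : s2 < s1 := hcon
    have hy1 : Y s2 ≤ Y s1 := hYm hs2lt.le
    have hy2 : Y' (t1 - s1) ≤ Y' (t2 - s2) := hY'm (by linarith)
    have hc : Y s2 = Y' (t2 - s2) := by linarith [he1, he2]
    have hc2 : Y s2 = Y' (t1 - s1) := by linarith [he1, he2]
    have hmem2 : s2 ∈ Sol t1 := by
      refine ⟨⟨max_le ?_ ?_, le_min ?_ ?_⟩, ?_⟩
      · exact le_trans (le_max_left _ _) hs2l
      · have : t2 - 2 ≤ s2 := le_trans (le_max_right _ _) hs2l; linarith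
      · exact le_trans hs2r (min_le_left _ _)
      · calc s2 ≤ s1 := hs2lt.le
          _ ≤ t1 := le_trans hs1r (min_le_right _ _)
      · have := hsqueeze Y' hY'm (t1 - s1) (t2 - s2) (t1 - s2) (Y s2)
          (by linarith) (by linarith) hc2.symm hc.symm
        exact this.symm
    exact absurd (hmin t1 s2 hmem2) (not_le.mpr hs2lt)
  have hanti : ∀ t1 ∈ Icc (0:ℝ) 4, ∀ t2 ∈ Icc (0:ℝ) 4, t1 ≤ t2 →
      t1 - S t1 ≤ t2 - S t2 := by
    rintro t1 ht1 t2 ht2 h12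
    by_contra hcon
    push_neg at hcon
    obtain ⟨⟨hs1l, hs1r⟩, he1⟩ := hmem t1 ht1
    obtain ⟨⟨hs2l, hs2r⟩, he2⟩ := hmem t2 ht2
    set s1 := S t1; set s2 := S t2
    have hslt : s1 < s2 := by linarith
    have hy1 : Y s1 ≤ Y s2 := hYm hslt.le
    have hy2 : Y' (t2 - s2) ≤ Y' (t1 - s1) := hY'm (by linarith)
    have hcY1 : Y s1 = Y' (t2 - s2) := by linarith [he1, he2]
    have hcY2 : Y s2 = Y' (t2 - s2) := by linarith [he1, he2]
    set st := s1 + (t2 - t1) with hst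
    have hstlt : st < s2 := by linarith
    have hYst : Y st = Y' (t2 - s2) :=
      hsqueeze Y hYm s1 s2 st (Y' (t2 - s2)) (by linarith) (by linarith) hcY1 hcY2
    have hmemst : st ∈ Sol t2 := by
      refine ⟨⟨max_le ?_ ?_, le_min (by linarith [le_trans hs2r (min_le_left 2 t2)]) ?_⟩, ?_⟩
      · have : (0:ℝ) ≤ s1 := le_trans (le_max_left _ _) hs1l
        linarith
      · have : t1 - 2 ≤ s1 := le_trans (le_max_right _ _) hs1l
        linarith
      · have : s1 ≤ t1 := le_trans hs1r (min_le_right _ _)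
        linarith
      · have : t2 - st = t1 - s1 := by ring
        rw [this, hYst, ← hcY1, he1]
    exact absurd (hmin t2 st hmemst) (not_le.mpr hstlt)
  have hS0 : S 0 = 0 := by
    have h := hmem 0 (by norm_num)
    have := h.1
    rw [show max (0:ℝ) (0-2) = 0 by norm_num, show min (2:ℝ) 0 = 0 by norm_num] at this
    exact le_antisymm this.2 this.1
  have hS4 : S 4 = 2 := by
    have h := hmem 4 (by norm_num)
    have := h.1
    rw [show max (0:ℝ) (4-2) = 2 by norm_num, show min (2:ℝ) 4 = 2 by norm_num] at this
    exact le_antisymm this.2 this.1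
  have hcont : ContinuousOn S (Icc 0 4) := by
    have hlip : LipschitzOnWith 1 S (Icc 0 4) := by
      rw [lipschitzOnWith_iff_dist_le_mul]
      intro t1 ht1 t2 ht2
      rw [Real.dist_eq, Real.dist_eq, NNReal.coe_one, one_mul]
      rcases le_total t1 t2 with h | h
      · have h1 := hmono ht1 ht2 h
        have h2 := hanti t1 ht1 t2 ht2 h
        rw [abs_of_nonpos (by linarith), abs_of_nonpos (by linarith)]; linarith
      · have h1 := hmono ht2 ht1 h
        have h2 := hanti t2 ht2 t1 ht1 h
        rw [abs_of_nonneg (by linarith), abs_of_nonneg (by linarith)]; linarith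
    exact hlip.continuousOn
  exact ⟨S, hmono, hanti, hcont, hS0, hS4, fun t ht => (hmem t ht).1,
    fun t ht => (hmem t ht).2⟩

lemma exists_refine {σ σ' : ℝ → ℝ} (hσ : Reparam σ) (hσ' : Reparam σ') :
    ∃ ρ ρ' : ℝ → ℝ, Reparam ρ ∧ Reparam ρ' ∧
      ∀ t ∈ Icc (0:ℝ) 1, σ (ρ t) = σ' (ρ' t) := by
  obtain ⟨ψ, hψc, hψm, hψl, hψ0, hψ2, hψσ, hψH⟩ := reparam_pkg hσ
  obtain ⟨φ, hφc, hφm, hφl, hφ0, hφ2, hφσ, hφH⟩ := reparam_pkg hσ'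
  set Y : ℝ → ℝ := fun s => s - ψ s with hY
  set Y' : ℝ → ℝ := fun s => s - φ s with hY'
  obtain ⟨S, hSm, hSa, hSc, hS0, hS4, hSb, hSe⟩ :=
    pairing Y Y' (continuous_id.sub hψc) (continuous_id.sub hφc)
      (fun a b h => by simp only [hY]; have := hψl a b h; linarith)
      (fun a b h => by simp only [hY']; have := hφl a b h; linarith)
      (by simp [hY, hψ0]) (by simp [hY, hψ2]; norm_num)
      (by simp [hY', hφ0]) (by simp [hY', hφ2]; norm_num)
  -- ψ of [0,2] lands in [0,1]
  have hψmem : ∀ s ∈ Icc (0:ℝ) 2, ψ s ∈ Icc (0:ℝ) 1 := by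
    rintro s ⟨h0, h2⟩
    constructor
    · rw [← hψ0]; exact hψm h0
    · rw [← hψ2]; exact hψm h2
  have hφmem : ∀ s ∈ Icc (0:ℝ) 2, φ s ∈ Icc (0:ℝ) 1 := by
    rintro s ⟨h0, h2⟩
    constructor
    · rw [← hφ0]; exact hφm h0
    · rw [← hφ2]; exact hφm h2
  have h4t : ∀ t ∈ Icc (0:ℝ) 1, (4*t) ∈ Icc (0:ℝ) 4 := by
    rintro t ⟨h0, h1⟩; constructor <;> linarith
  have hSrange : ∀ u ∈ Icc (0:ℝ) 4, S u ∈ Icc (0:ℝ) 2 := by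
    intro u hu
    obtain ⟨hl, hr⟩ := hSb u hu
    exact ⟨le_trans (le_max_left _ _) hl, le_trans hr (min_le_left _ _)⟩
  have hSrange' : ∀ u ∈ Icc (0:ℝ) 4, u - S u ∈ Icc (0:ℝ) 2 := by
    intro u hu
    obtain ⟨hl, hr⟩ := hSb u hu
    constructor
    · have := le_trans hr (min_le_right _ _); linarith
    · have := le_trans (le_max_right _ _) hl; linarith
  set ρ : ℝ → ℝ := fun t => ψ (S (4*t)) with hρ
  set ρ' : ℝ → ℝ := fun t => φ (4*t - S (4*t)) with hρ'
  have hcont4 : ContinuousOn (fun t : ℝ => S (4*t)) (Icc 0 1) :=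
    hSc.comp (continuous_const.mul continuous_id).continuousOn h4t
  refine ⟨ρ, ρ', ⟨?_, ?_, ?_, ?_⟩, ⟨?_, ?_, ?_, ?_⟩, ?_⟩
  · exact hψc.comp_continuousOn hcont4
  · intro a ha b hb hab
    exact hψm (hSm (h4t a ha) (h4t b hb) (by linarith))
  · intro t ht
    exact hψmem _ (hSrange _ (h4t t ht))
  · -- surjectivity of ρ
    intro y hy
    set s0 : ℝ := y + σ (clampR y) with hs0
    have hσy : σ (clampR y) ∈ Icc (0:ℝ) 1 := by
      rw [clampR_of_mem hy]; exact hσ.2.2.1 hy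
    have hs0mem : s0 ∈ Icc (0:ℝ) 2 := by
      constructor
      · have := hσy.1; have := hy.1; simp only [hs0]; linarith
      · have := hσy.2; have := hy.2; simp only [hs0]; linarith
    obtain ⟨t, ht, hts⟩ := intermediate_value_Icc (by norm_num : (0:ℝ) ≤ 1) hcont4
      (show s0 ∈ Icc (S (4*0)) (S (4*1)) by
        rw [show (4:ℝ)*0 = 0 by ring, show (4:ℝ)*1 = 4 by ring, hS0, hS4]
        exact hs0mem)
    change S (4 * t) = s0 at hts
    refine ⟨t, ht, ?_⟩
    simp only [hρ]
    rw [hts, hs0, hψH y]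
  · exact hφc.comp_continuousOn
      ((continuous_const.mul continuous_id).continuousOn.sub hcont4)
  · intro a ha b hb hab
    exact hφm (hSa (4*a) (h4t a ha) (4*b) (h4t b hb) (by linarith))
  · intro t ht
    exact hφmem _ (hSrange' _ (h4t t ht))
  · -- surjectivity of ρ'
    intro y hy
    set s0 : ℝ := y + σ' (clampR y) with hs0
    have hσy : σ' (clampR y) ∈ Icc (0:ℝ) 1 := by
      rw [clampR_of_mem hy]; exact hσ'.2.2.1 hy
    have hs0mem : s0 ∈ Icc (0:ℝ) 2 := by
      constructor
      · have := hσy.1; have := hy.1; simp only [hs0]; linarith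
      · have := hσy.2; have := hy.2; simp only [hs0]; linarith
    have hG : ContinuousOn (fun t : ℝ => 4*t - S (4*t)) (Icc 0 1) :=
      (continuous_const.mul continuous_id).continuousOn.sub hcont4
    obtain ⟨t, ht, hts⟩ := intermediate_value_Icc (by norm_num : (0:ℝ) ≤ 1) hG
      (show s0 ∈ Icc (4*0 - S (4*0)) (4*1 - S (4*1)) by
        rw [show (4:ℝ)*0 = 0 by ring, show (4:ℝ)*1 = 4 by ring, hS0, hS4]
        norm_num
        exact hs0mem)
    change 4 * t - S (4 * t) = s0 at hts
    refine ⟨t, ht, ?_⟩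
    simp only [hρ']
    rw [hts, hs0, hφH y]
  · -- the common-value identity
    intro t ht
    have hu := h4t t ht
    have h1 : σ (ρ t) = Y (S (4*t)) := by
      have hmem := hψmem _ (hSrange _ hu)
      simp only [hρ]
      rw [← clampR_of_mem hmem, hψσ]
    have h2 : σ' (ρ' t) = Y' (4*t - S (4*t)) := by
      have hmem := hφmem _ (hSrange' _ hu)
      simp only [hρ']
      rw [← clampR_of_mem hmem, hφσ]
    rw [h1, h2]
    exact hSe _ hu

lemma Reparam.comp {σ ρ : ℝ → ℝ} (hσ : Reparam σ) (hρ : Reparam ρ) :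
    Reparam (fun t => σ (ρ t)) :=
  ⟨hσ.1.comp hρ.1 hρ.2.2.1,
   fun a ha b hb hab => hσ.2.1 (hρ.2.2.1 ha) (hρ.2.2.1 hb) (hρ.2.1 ha hb hab),
   hσ.2.2.1.comp hρ.2.2.1,
   hσ.2.2.2.comp hρ.2.2.2⟩

lemma reparam_id : Reparam (fun t => t) :=
  ⟨continuousOn_id, fun _ _ _ _ h => h, fun x hx => hx, fun x hx => ⟨x, hx, rfl⟩⟩

lemma multi_refine : ∀ (n : ℕ) (g : Fin n → ℝ → ℝ), (∀ j, Reparam (g j)) →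
    ∃ (γ : ℝ → ℝ) (ρ : Fin n → ℝ → ℝ), Reparam γ ∧ (∀ j, Reparam (ρ j)) ∧
      ∀ t ∈ Icc (0:ℝ) 1, ∀ j, g j (ρ j t) = γ t := by
  intro n
  induction n with
  | zero =>
    intro g _
    exact ⟨fun t => t, Fin.elim0, reparam_id, fun j => j.elim0, fun t _ j => j.elim0⟩
  | succ n ih =>
    intro g hg
    obtain ⟨γ, ρ, hγ, hρ, hid⟩ := ih (fun j => g j.succ) (fun j => hg j.succ)
    obtain ⟨ρ0, π, hρ0, hπ, hre⟩ := exists_refine (hg 0) hγ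
    refine ⟨fun t => γ (π t), Fin.cases ρ0 (fun j => fun t => ρ j (π t)),
      hγ.comp hπ, ?_, ?_⟩
    · intro j
      refine Fin.cases ?_ ?_ j
      · exact hρ0
      · intro j'
        exact (hρ j').comp hπ
    · intro t ht j
      refine Fin.cases ?_ ?_ j
      · simpa using hre t ht
      · intro j'
        simpa using hid (π t) (hπ.2.2.1 ht) j'

lemma frechetDist_nonneg {d : ℕ} (α β : ℝ → EuclideanSpace ℝ (Fin d)) :
    0 ≤ frechetDist α β := by
  apply Real.sInf_nonneg
  rintro r ⟨σ, τ, hσ, hτ, hb⟩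
  exact le_trans (norm_nonneg _) (hb 0 (by norm_num))


/-- the Fréchet distance of a set of curves is at most
`min_i max_{j<k} (d_{ij} + d_{ik})` where `d_{ij}` is the pairwise Fréchet distance;
hence pairwise distances give a 2-approximation. -/
theorem frechet_set_dist_le {d m : ℕ} (hm : 2 ≤ m)
    (f : Fin m → (ℝ → EuclideanSpace ℝ (Fin d))) :
    frechetSetDist f ≤ ⨅ i : Fin m, ⨆ pr : {pr : Fin m × Fin m // pr.1 < pr.2},
      (frechetDist (f i) (f (pr : Fin m × Fin m).1) +
        frechetDist (f i) (f (pr : Fin m × Fin m).2)) := by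
  haveI : Nonempty (Fin m) := ⟨⟨0, by omega⟩⟩
  set D := {r : ℝ | ∃ α : Fin m → (ℝ → ℝ), (∀ i, Reparam (α i)) ∧
    ∀ t ∈ Icc (0:ℝ) 1, ∀ j k : Fin m, ‖f j (α j t) - f k (α k t)‖ ≤ r} with hD
  have hDbdd : BddBelow D := by
    refine ⟨0, fun r hr => ?_⟩
    obtain ⟨α, hα, hb⟩ := hr
    have := hb 0 (by norm_num) ⟨0, by omega⟩ ⟨0, by omega⟩
    simpa using this
  have hpr01 : ((⟨0, by omega⟩ : Fin m), (⟨1, by omega⟩ : Fin m)).1 <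
      ((⟨0, by omega⟩ : Fin m), (⟨1, by omega⟩ : Fin m)).2 := by
    simp [Fin.lt_def]
  have hbddS : ∀ i : Fin m, BddAbove (range fun pr : {pr : Fin m × Fin m // pr.1 < pr.2} =>
      frechetDist (f i) (f pr.1.1) + frechetDist (f i) (f pr.1.2)) :=
    fun i => Set.Finite.bddAbove (Set.finite_range _)
  have hSi0 : ∀ i : Fin m, (0:ℝ) ≤ ⨆ pr : {pr : Fin m × Fin m // pr.1 < pr.2},
      (frechetDist (f i) (f pr.1.1) + frechetDist (f i) (f pr.1.2)) := by
    intro i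
    refine le_trans ?_ (le_ciSup (hbddS i) ⟨_, hpr01⟩)
    exact add_nonneg (frechetDist_nonneg _ _) (frechetDist_nonneg _ _)
  by_cases hDne : D.Nonempty
  · apply le_ciInf
    intro i
    have hpair : ∀ j : Fin m, {r : ℝ | ∃ σ τ : ℝ → ℝ, Reparam σ ∧ Reparam τ ∧
        ∀ t ∈ Icc (0:ℝ) 1, ‖f i (σ t) - f j (τ t)‖ ≤ r}.Nonempty := by
      intro j
      obtain ⟨r, α, hα, hb⟩ := hDne
      exact ⟨r, α i, α j, hα i, hα j, fun t ht => hb t ht i j⟩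
    apply le_of_forall_pos_le_add
    intro ε hε
    have hchoice : ∀ j : Fin m, ∃ σ τ : ℝ → ℝ, Reparam σ ∧ Reparam τ ∧
        ∀ t ∈ Icc (0:ℝ) 1, ‖f i (σ t) - f j (τ t)‖ ≤ frechetDist (f i) (f j) + ε/2 := by
      intro j
      obtain ⟨r, hrmem, hrlt⟩ := Real.lt_sInf_add_pos (hpair j) (half_pos hε)
      obtain ⟨σ, τ, hσ, hτ, hb⟩ := hrmem
      exact ⟨σ, τ, hσ, hτ, fun t ht => (hb t ht).trans hrlt.le⟩
    choose σf τf hσf hτf hbf using hchoice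
    obtain ⟨γ, ρ, hγ, hρ, hid⟩ := multi_refine m σf hσf
    set α : Fin m → ℝ → ℝ := fun j => fun t => τf j (ρ j t) with hαdef
    have hα : ∀ j, Reparam (α j) := fun j => (hτf j).comp (hρ j)
    have key : ∀ t ∈ Icc (0:ℝ) 1, ∀ j,
        ‖f i (γ t) - f j (α j t)‖ ≤ frechetDist (f i) (f j) + ε/2 := by
      intro t ht j
      have h1 := hbf j (ρ j t) ((hρ j).2.2.1 ht)
      rw [hid t ht j] at h1
      exact h1
    have hSile : ∀ j k : Fin m, j ≠ k →
        frechetDist (f i) (f j) + frechetDist (f i) (f k) ≤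
        ⨆ pr : {pr : Fin m × Fin m // pr.1 < pr.2},
          (frechetDist (f i) (f pr.1.1) + frechetDist (f i) (f pr.1.2)) := by
      intro j k hjk
      rcases lt_or_gt_of_ne hjk with h | h
      · exact le_ciSup (hbddS i) ⟨(j, k), h⟩
      · have := le_ciSup (hbddS i) ⟨(k, j), h⟩
        simpa [add_comm] using this
    have hmemD : (⨆ pr : {pr : Fin m × Fin m // pr.1 < pr.2},
        (frechetDist (f i) (f pr.1.1) + frechetDist (f i) (f pr.1.2))) + ε ∈ D := by
      refine ⟨α, hα, ?_⟩
      intro t ht j k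
      by_cases hjk : j = k
      · subst hjk
        simp only [sub_self, norm_zero]
        linarith [hSi0 i]
      · have htri : ‖f j (α j t) - f k (α k t)‖ ≤
            ‖f j (α j t) - f i (γ t)‖ + ‖f i (γ t) - f k (α k t)‖ := by
          have := dist_triangle (f j (α j t)) (f i (γ t)) (f k (α k t))
          simpa [dist_eq_norm] using this
        have h1 : ‖f j (α j t) - f i (γ t)‖ ≤ frechetDist (f i) (f j) + ε/2 := by
          rw [norm_sub_rev]; exact key t ht j
        have h2 := key t ht k
        have h3 := hSile j k hjk
        linarith
    exact csInf_le hDbdd hmemD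
  · rw [Set.not_nonempty_iff_eq_empty] at hDne
    show sInf D ≤ _
    rw [hDne, Real.sInf_empty]
    exact le_ciInf fun i => hSi0 i
end

section
/- Let S = {s_i = [0,a_i] × {i}} and T = {t_i = [b_i, 1] × {i}} with 0 ≤ a_i ≤ b_i ≤ 1 for 1 ≤ i ≤ m be two sets of horizontal segments attached to the left and right walls of the unit-width slab. The double-ended-queue algorithm (Algorithm Ray-Shooting) correctly assigns to each segment s_i the first segment in S ∪ T directly above its right endpoint: it maintains the invariant that after iteration i, the queue contains exactly the segments of {s₁,…,s_i} not covered by any segment of {s₁,…,s_i} ∪ {t₁,…,t_i}, ordered by decreasing length from bottom to top. -/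
open List

/-- One iteration of the Ray-Shooting algorithm, processing segment `i`.
The state is `(deque, up-assignments)`; the deque is a list of indices of segments of `S`
with the top of the deque at the head. An assignment `(s, j, tb)` records that the first
segment above the right endpoint of `s_s` is `t_j` (if `tb = true`) or `s_j` (if `tb = false`).
Here `a s` is the right endpoint of `s_s = [0, a s] × {s}` and `b j` is the left endpoint of
`t_j = [b j, 1] × {j}`. -/
noncomputable def rayStep (a b : ℕ → ℝ) (i : ℕ)
    (st : List ℕ × List (ℕ × ℕ × Bool)) : List ℕ × List (ℕ × ℕ × Bool) :=
  let dq := st.1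
  let poppedTop := dq.takeWhile (fun s => decide (a s ≤ a i))
  let dq1 := dq.dropWhile (fun s => decide (a s ≤ a i))
  let poppedBot := dq1.reverse.takeWhile (fun s => decide (b i ≤ a s))
  let dq2 := (dq1.reverse.dropWhile (fun s => decide (b i ≤ a s))).reverse
  (i :: dq2,
    st.2 ++ poppedTop.map (fun s => (s, i, false)) ++ poppedBot.map (fun s => (s, i, true)))

/-- The state of the Ray-Shooting algorithm after processing segments `1, 2, …, i`. -/
noncomputable def rayRun (a b : ℕ → ℝ) (i : ℕ) : List ℕ × List (ℕ × ℕ × Bool) :=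
  (List.range' 2 (i - 1)).foldl (fun st k => rayStep a b k st) ([1], [])

/-!
Segment `s_k` is covered by `s_j` (`k < j`) exactly when `a k ≤ a j`, and by `t_j` exactly when
`b j ≤ a k`. The deque holds the segments uncovered so far, with lengths increasing from top to
bottom. Hence the segments that `s_i` covers form a top prefix of the deque and those that `t_i`
covers form a bottom suffix, so the two `dropWhile`s remove exactly the segments that become
covered at step `i`. Each of them was uncovered through step `i - 1`, so `i` is the first
segment above its right endpoint.
-/

def Uncovered (a b : ℕ → ℝ) (i s : ℕ) : Prop :=
  1 ≤ s ∧ s ≤ i ∧ ∀ j, s < j → j ≤ i → ¬ a s ≤ a j ∧ ¬ b j ≤ a s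

theorem List.Pairwise.mem_dropWhile_iff {α : Type*} {r : α → α → Prop} {p : α → Bool}
    {l : List α} (hl : l.Pairwise r) (hp : ∀ x y, r x y → p y → p x) {x : α} :
    x ∈ l.dropWhile p ↔ x ∈ l ∧ ¬ p x := by
  induction l with
  | nil => simp
  | cons c l ih =>
    rw [pairwise_cons] at hl
    by_cases hc : p c
    · rw [dropWhile_cons_of_pos hc, ih hl.2, mem_cons]
      constructor
      · exact fun h => ⟨Or.inr h.1, h.2⟩
      · rintro ⟨rfl | hx, hpx⟩
        · exact absurd hc hpx
        · exact ⟨hx, hpx⟩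
    · rw [dropWhile_cons_of_neg hc, iff_self_and, mem_cons]
      rintro (rfl | hx) hpx
      · exact hc hpx
      · exact hc (hp c x (hl.1 x hx) hpx)

section RayShooting

variable {a b : ℕ → ℝ}

theorem rayRun_one : rayRun a b 1 = ([1], []) := by
  simp [rayRun]

theorem rayRun_succ {i : ℕ} (hi : 1 ≤ i) :
    rayRun a b (i + 1) = rayStep a b (i + 1) (rayRun a b i) := by
  obtain ⟨k, rfl⟩ := Nat.exists_eq_add_of_le' hi
  simp [rayRun, List.range'_concat, List.foldl_append, add_comm 2 k]

theorem mem_dropWhile_le_iff {dq : List ℕ} (hdq : dq.Pairwise (fun s s' => a s < a s'))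
    {c : ℝ} {s : ℕ} : s ∈ dq.dropWhile (fun s => decide (a s ≤ c)) ↔ s ∈ dq ∧ ¬ a s ≤ c := by
  rw [hdq.mem_dropWhile_iff, decide_eq_true_eq]
  simp only [decide_eq_true_eq]
  exact fun x y hxy hy => hxy.le.trans hy

theorem mem_rayStep_fst_iff {j : ℕ} {st : List ℕ × List (ℕ × ℕ × Bool)}
    (hst : st.1.Pairwise (fun s s' => a s < a s')) {s : ℕ} :
    s ∈ (rayStep a b j st).1 ↔ s = j ∨ (s ∈ st.1 ∧ ¬ a s ≤ a j ∧ ¬ b j ≤ a s) := by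
  have hrev : (st.1.dropWhile fun s => decide (a s ≤ a j)).reverse.Pairwise
      (fun s s' => a s' < a s) :=
    pairwise_reverse.2 (hst.sublist (dropWhile_sublist _))
  simp only [rayStep, mem_cons, mem_reverse]
  rw [hrev.mem_dropWhile_iff, mem_reverse, mem_dropWhile_le_iff hst]
  · simp only [decide_eq_true_eq, and_assoc]
  · simp only [decide_eq_true_eq]
    exact fun x y hxy hy => hy.trans hxy.le

theorem rayStep_fst_pairwise {j : ℕ} {st : List ℕ × List (ℕ × ℕ × Bool)}
    (hst : st.1.Pairwise (fun s s' => a s < a s')) :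
    (rayStep a b j st).1.Pairwise (fun s s' => a s < a s') := by
  refine pairwise_cons.2 ⟨fun s hs => ?_, ?_⟩
  · have hs := (dropWhile_sublist _).mem (mem_reverse.1 hs)
    rw [mem_reverse, mem_dropWhile_le_iff hst] at hs
    exact lt_of_not_ge hs.2
  · refine pairwise_reverse.2 ((pairwise_reverse.2 ?_).sublist (dropWhile_sublist _))
    exact hst.sublist (dropWhile_sublist _)

theorem rayStep_snd_mem {j s k : ℕ} {tb : Bool} {st : List ℕ × List (ℕ × ℕ × Bool)}
    (h : (s, k, tb) ∈ (rayStep a b j st).2) :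
    (s, k, tb) ∈ st.2 ∨ (s ∈ st.1 ∧ k = j ∧ if tb then b j ≤ a s else a s ≤ a j) := by
  simp only [rayStep, mem_append, mem_map, Prod.mk.injEq] at h
  rcases h with (hold | ⟨x, hx, rfl, rfl, rfl⟩) | ⟨x, hx, rfl, rfl, rfl⟩
  · exact Or.inl hold
  · refine Or.inr ⟨(takeWhile_sublist _).mem hx, rfl, ?_⟩
    simpa using mem_takeWhile_imp hx
  · have hx' := mem_reverse.1 ((takeWhile_sublist _).mem hx)
    refine Or.inr ⟨(dropWhile_sublist _).mem hx', rfl, ?_⟩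
    simpa using mem_takeWhile_imp hx

theorem uncovered_succ_iff {i s : ℕ} :
    Uncovered a b (i + 1) s ↔
      s = i + 1 ∨ (Uncovered a b i s ∧ ¬ a s ≤ a (i + 1) ∧ ¬ b (i + 1) ≤ a s) := by
  constructor
  · rintro ⟨hs1, hsi, hunc⟩
    rcases Nat.lt_or_eq_of_le hsi with hs | rfl
    · exact Or.inr ⟨⟨hs1, by omega, fun j hj hj' => hunc j hj (by omega)⟩,
        hunc (i + 1) hs le_rfl⟩
    · exact Or.inl rfl
  · rintro (rfl | ⟨⟨hs1, hsi, hunc⟩, hs, ht⟩)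
    · exact ⟨by omega, le_rfl, fun j hj hj' => by omega⟩
    · refine ⟨hs1, by omega, fun j hj hj' => ?_⟩
      rcases Nat.lt_or_eq_of_le hj' with hj' | rfl
      · exact hunc j hj (by omega)
      · exact ⟨hs, ht⟩

theorem rayRun_fst_invariant {i : ℕ} (hi : 1 ≤ i) :
    (rayRun a b i).1.Pairwise (fun s s' => a s < a s') ∧
      ∀ s, s ∈ (rayRun a b i).1 ↔ Uncovered a b i s := by
  induction i, hi using Nat.le_induction with
  | base =>
    refine ⟨by simp [rayRun_one], fun s => ?_⟩
    rw [rayRun_one, mem_singleton]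
    exact ⟨by rintro rfl; exact ⟨le_rfl, le_rfl, fun j hj hj' => by omega⟩,
      fun ⟨hs1, hsi, _⟩ => by omega⟩
  | succ i hi ih =>
    rw [rayRun_succ hi]
    refine ⟨rayStep_fst_pairwise ih.1, fun s => ?_⟩
    rw [mem_rayStep_fst_iff ih.1, ih.2, uncovered_succ_iff]

theorem rayRun_snd_spec (i : ℕ) :
    ∀ s j tb, (s, j, tb) ∈ (rayRun a b i).2 →
      1 ≤ s ∧ s < j ∧ j ≤ i ∧ (if tb then b j ≤ a s else a s ≤ a j) ∧
        ∀ l, s < l → l < j → ¬ (a s ≤ a l) ∧ ¬ (b l ≤ a s) := by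
  induction i with
  | zero => simp [rayRun]
  | succ i ih =>
    rcases Nat.eq_zero_or_pos i with rfl | hi
    · simp [rayRun]
    rw [rayRun_succ hi]
    intro s j tb h
    rcases rayStep_snd_mem h with hold | ⟨hs, rfl, hcond⟩
    · obtain ⟨hs1, hsj, hji, hcond, hfirst⟩ := ih s j tb hold
      exact ⟨hs1, hsj, by omega, hcond, hfirst⟩
    · obtain ⟨hs1, hsi, hunc⟩ := ((rayRun_fst_invariant hi).2 s).1 hs
      exact ⟨hs1, by omega, le_rfl, hcond, fun l hl hl' => hunc l hl (by omega)⟩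

end RayShooting

theorem rayShooting_correct_general (a b : ℕ → ℝ) (m : ℕ) :
    (∀ i, 1 ≤ i → i ≤ m →
      ((rayRun a b i).1.Pairwise (fun s s' => a s < a s') ∧
        ∀ s, s ∈ (rayRun a b i).1 ↔
          (1 ≤ s ∧ s ≤ i ∧ ∀ j, s < j → j ≤ i → ¬ (a s ≤ a j) ∧ ¬ (b j ≤ a s)))) ∧
    (∀ s j tb, (s, j, tb) ∈ (rayRun a b m).2 →
      1 ≤ s ∧ s < j ∧ j ≤ m ∧ (if tb then b j ≤ a s else a s ≤ a j) ∧
        ∀ l, s < l → l < j → ¬ (a s ≤ a l) ∧ ¬ (b l ≤ a s)) :=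
  ⟨fun _ hi _ => rayRun_fst_invariant hi, rayRun_snd_spec m⟩

/-- correctness of the Ray-Shooting algorithm. After each iteration `i`, the
deque contains exactly the segments among `s₁,…,s_i` not covered by any segment of
`{s₁,…,s_i} ∪ {t₁,…,t_i}`, ordered by decreasing length from bottom to top; and every
recorded up-pointer `(s, j, tb)` is the first segment of `S ∪ T` directly above the right
endpoint of `s_s`. -/
theorem rayShooting_correct (a b : ℕ → ℝ) (m : ℕ) (hm : 1 ≤ m)
    (hab : ∀ i, 1 ≤ i → i ≤ m → 0 ≤ a i ∧ a i ≤ b i ∧ b i ≤ 1) :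
    (∀ i, 1 ≤ i → i ≤ m →
      ((rayRun a b i).1.Pairwise (fun s s' => a s < a s') ∧
        ∀ s, s ∈ (rayRun a b i).1 ↔
          (1 ≤ s ∧ s ≤ i ∧ ∀ j, s < j → j ≤ i → ¬ (a s ≤ a j) ∧ ¬ (b j ≤ a s)))) ∧
    (∀ s j tb, (s, j, tb) ∈ (rayRun a b m).2 →
      1 ≤ s ∧ s < j ∧ j ≤ m ∧ (if tb then b j ≤ a s else a s ≤ a j) ∧
        ∀ l, s < l → l < j → ¬ (a s ≤ a l) ∧ ¬ (b l ≤ a s)) :=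
  rayShooting_correct_general a b m
end

section
/- In the free space of a single cell with speed constraints, projecting the reachable set through the cell produces an interval: for p on the entry side of a cell and slope bounds 0 ≤ σ_min ≤ σ_max, the projection proj(p) = {q on the exit side : slope of segment pq ∈ [σ_min, σ_max]} is a (possibly empty) connected subset of the exit side, and for an interval I on the entry side, proj(I) = ⋃_{p ∈ I} proj(p) is connected on the exit side. -/
open Set

lemma pleq_of_le {a b : ℝ × ℝ} (h1 : a.1 ≤ b.1) (h2 : b.2 ≤ a.2) : pleq a b := by
  rcases h1.lt_or_eq with h | h
  · exact Or.inl (Or.inl h)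
  · rcases h2.lt_or_eq with h' | h'
    · exact Or.inl (Or.inr ⟨h, h'⟩)
    · exact Or.inr (Prod.ext h h'.symm)

lemma pleq_trans_s18 {a b c : ℝ × ℝ} (h1 : pleq a b) (h2 : pleq b c) : pleq a c := by
  rcases h1 with h1 | rfl; rcases h2 with h2 | rfl
  · rcases h1 with h1 | ⟨e1, l1⟩ <;> rcases h2 with h2 | ⟨e2, l2⟩
    · exact Or.inl (Or.inl (h1.trans h2))
    · exact Or.inl (Or.inl (e2 ▸ h1))
    · exact Or.inl (Or.inl (e1 ▸ h2))
    · exact Or.inl (Or.inr ⟨e1.trans e2, l2.trans l1⟩)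
  · exact Or.inl h1
  · exact h2

lemma pleq_total (a b : ℝ × ℝ) : pleq a b ∨ pleq b a := by
  rcases lt_trichotomy a.1 b.1 with h | h | h
  · exact Or.inl (Or.inl (Or.inl h))
  · rcases lt_trichotomy a.2 b.2 with h' | h' | h'
    · exact Or.inr (Or.inl (Or.inr ⟨h.symm, h'⟩))
    · exact Or.inl (Or.inr (Prod.ext h h'))
    · exact Or.inl (Or.inl (Or.inr ⟨h, h'⟩))
  · exact Or.inr (Or.inl (Or.inl h))

lemma mem_entry_iff {a : ℝ × ℝ} :
    a ∈ entrySide ↔ (a.1 = 0 ∧ 0 ≤ a.2 ∧ a.2 ≤ 1) ∨ (0 ≤ a.1 ∧ a.1 ≤ 1 ∧ a.2 = 0) := by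
  obtain ⟨x, y⟩ := a
  simp only [entrySide, mem_union, Set.mem_prod, mem_singleton_iff, mem_Icc]
  tauto

lemma mem_exit_iff {a : ℝ × ℝ} :
    a ∈ exitSide ↔ (0 ≤ a.1 ∧ a.1 ≤ 1 ∧ a.2 = 1) ∨ (a.1 = 1 ∧ 0 ≤ a.2 ∧ a.2 ≤ 1) := by
  obtain ⟨x, y⟩ := a
  simp only [exitSide, mem_union, Set.mem_prod, mem_singleton_iff, mem_Icc]
  tauto

lemma entry_coords {a : ℝ × ℝ} (h : a ∈ entrySide) :
    0 ≤ a.1 ∧ a.1 ≤ 1 ∧ 0 ≤ a.2 ∧ a.2 ≤ 1 := by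
  rcases mem_entry_iff.1 h with ⟨h1, h2, h3⟩ | ⟨h1, h2, h3⟩ <;>
    refine ⟨by linarith, by linarith, by linarith, by linarith⟩

lemma exit_coords {a : ℝ × ℝ} (h : a ∈ exitSide) :
    0 ≤ a.1 ∧ a.1 ≤ 1 ∧ 0 ≤ a.2 ∧ a.2 ≤ 1 := by
  rcases mem_exit_iff.1 h with ⟨h1, h2, h3⟩ | ⟨h1, h2, h3⟩ <;>
    refine ⟨by linarith, by linarith, by linarith, by linarith⟩

lemma entry_mono {a b : ℝ × ℝ} (ha : a ∈ entrySide) (hb : b ∈ entrySide)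
    (h : pleq a b) : a.1 ≤ b.1 ∧ b.2 ≤ a.2 := by
  rcases h with h | rfl
  · rcases h with h | ⟨e, l⟩
    · refine ⟨le_of_lt h, ?_⟩
      rcases mem_entry_iff.1 ha with ⟨h1, h2, h3⟩ | ⟨h1, h2, h3⟩ <;>
        rcases mem_entry_iff.1 hb with ⟨g1, g2, g3⟩ | ⟨g1, g2, g3⟩ <;> linarith
    · exact ⟨le_of_eq e, le_of_lt l⟩
  · exact ⟨le_refl _, le_refl _⟩

lemma exit_mono {a b : ℝ × ℝ} (ha : a ∈ exitSide) (hb : b ∈ exitSide)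
    (h : pleq a b) : a.1 ≤ b.1 ∧ b.2 ≤ a.2 := by
  rcases h with h | rfl
  · rcases h with h | ⟨e, l⟩
    · refine ⟨le_of_lt h, ?_⟩
      rcases mem_exit_iff.1 ha with ⟨h1, h2, h3⟩ | ⟨h1, h2, h3⟩ <;>
        rcases mem_exit_iff.1 hb with ⟨g1, g2, g3⟩ | ⟨g1, g2, g3⟩ <;> linarith
    · exact ⟨le_of_eq e, le_of_lt l⟩
  · exact ⟨le_refl _, le_refl _⟩

noncomputable def bplus (σ : ℝ) (x : ℝ × ℝ) : ℝ × ℝ :=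
  if x.2 ≤ σ * x.1 then (x.1 - x.2 / σ, 0) else (0, x.2 - σ * x.1)

noncomputable def bminus (σ : ℝ) (x : ℝ × ℝ) : ℝ × ℝ :=
  if σ * x.1 ≤ x.2 then (0, x.2 - σ * x.1) else (x.1 - x.2 / σ, 0)

lemma bottom_case (σ : ℝ) (hσ : 0 ≤ σ) {x : ℝ × ℝ} (hx : x ∈ exitSide) (h : x.2 ≤ σ * x.1) :
    ((x.1 - x.2 / σ, (0:ℝ)) : ℝ × ℝ) ∈ entrySide ∧ x.1 - x.2 / σ ≤ x.1 ∧ (0:ℝ) ≤ x.2 ∧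
      x.2 - (0:ℝ) = σ * (x.1 - (x.1 - x.2 / σ)) := by
  obtain ⟨hx0, hx1, hy0, hy1⟩ := exit_coords hx
  have hd0 : 0 ≤ x.2 / σ := div_nonneg hy0 hσ
  have hσd : σ * (x.2 / σ) = x.2 := by
    rcases hσ.eq_or_lt with h0 | h0
    · rw [← h0] at h ⊢
      rw [zero_mul] at h
      have : x.2 = 0 := le_antisymm h hy0
      rw [this, zero_mul]
    · field_simp
  have hd1 : x.2 / σ ≤ x.1 := by
    rcases hσ.eq_or_lt with h0 | h0
    · rw [← h0] at h ⊢
      rw [zero_mul] at h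
      have : x.2 = 0 := le_antisymm h hy0
      rw [this, zero_div]; exact hx0
    · rw [div_le_iff₀ h0]; nlinarith
  refine ⟨?_, by linarith, hy0, by rw [sub_zero, sub_sub_cancel, hσd]⟩
  exact mem_entry_iff.2 (Or.inr ⟨by simp; linarith, by simp; linarith, rfl⟩)

lemma left_case (σ : ℝ) (hσ : 0 ≤ σ) {x : ℝ × ℝ} (hx : x ∈ exitSide) (h : σ * x.1 ≤ x.2) :
    (((0:ℝ), x.2 - σ * x.1) : ℝ × ℝ) ∈ entrySide ∧ (0:ℝ) ≤ x.1 ∧ x.2 - σ * x.1 ≤ x.2 ∧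
      x.2 - (x.2 - σ * x.1) = σ * (x.1 - (0:ℝ)) := by
  obtain ⟨hx0, hx1, hy0, hy1⟩ := exit_coords hx
  have hsx : 0 ≤ σ * x.1 := mul_nonneg hσ hx0
  refine ⟨?_, hx0, by linarith, by ring⟩
  exact mem_entry_iff.2 (Or.inl ⟨rfl, by simp; linarith, by simp; linarith⟩)

lemma bplus_props (σ : ℝ) (hσ : 0 ≤ σ) {x : ℝ × ℝ} (hx : x ∈ exitSide) :
    bplus σ x ∈ entrySide ∧ (bplus σ x).1 ≤ x.1 ∧ (bplus σ x).2 ≤ x.2 ∧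
      x.2 - (bplus σ x).2 = σ * (x.1 - (bplus σ x).1) := by
  unfold bplus; split_ifs with h
  · exact bottom_case σ hσ hx h
  · exact left_case σ hσ hx (le_of_lt (not_le.mp h))

lemma bminus_props (σ : ℝ) (hσ : 0 ≤ σ) {x : ℝ × ℝ} (hx : x ∈ exitSide) :
    bminus σ x ∈ entrySide ∧ (bminus σ x).1 ≤ x.1 ∧ (bminus σ x).2 ≤ x.2 ∧
      x.2 - (bminus σ x).2 = σ * (x.1 - (bminus σ x).1) := by
  unfold bminus; split_ifs with h
  · exact left_case σ hσ hx h
  · exact bottom_case σ hσ hx (le_of_lt (not_le.mp h))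

lemma mem_of_props {σmin σmax σ : ℝ} (h1 : σmin ≤ σ) (h2 : σ ≤ σmax) {x m : ℝ × ℝ}
    (hx : x ∈ exitSide) (hm1 : m.1 ≤ x.1) (hm2 : m.2 ≤ x.2)
    (he : x.2 - m.2 = σ * (x.1 - m.1)) : x ∈ projCell σmin σmax m := by
  refine ⟨hx, hm1, hm2, ?_, ?_⟩
  · rw [he]; exact mul_le_mul_of_nonneg_right h1 (by linarith)
  · rw [he]; exact mul_le_mul_of_nonneg_right h2 (by linarith)

lemma le_bplus {σmin σmax : ℝ} (h0 : 0 ≤ σmin) (h1 : σmin ≤ σmax) {x p : ℝ × ℝ}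
    (hp : p ∈ entrySide) (hmem : x ∈ projCell σmin σmax p) : pleq p (bplus σmax x) := by
  obtain ⟨hx, hpx1, hpx2, hlo, hhi⟩ := hmem
  obtain ⟨hx0, hx1, hy0, hy1⟩ := exit_coords hx
  obtain ⟨hp0, hp1, hq0, hq1⟩ := entry_coords hp
  have hσ : 0 ≤ σmax := le_trans h0 h1
  unfold bplus; split_ifs with h
  · apply pleq_of_le
    · show p.1 ≤ x.1 - x.2 / σmax
      rcases mem_entry_iff.1 hp with ⟨e1, e2, e3⟩ | ⟨e1, e2, e3⟩
      · rcases hσ.eq_or_lt with h0' | h0'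
        · rw [← h0'] at h
          rw [zero_mul] at h
          have hx2 : x.2 = 0 := le_antisymm h hy0
          rw [e1, hx2, zero_div]; linarith
        · rw [e1, le_sub_iff_add_le, zero_add, div_le_iff₀ h0']
          nlinarith
      · rcases hσ.eq_or_lt with h0' | h0'
        · rw [← h0'] at h
          rw [zero_mul] at h
          have hx2 : x.2 = 0 := le_antisymm h hy0
          rw [hx2, zero_div]; linarith
        · have hd : x.2 / σmax ≤ x.1 - p.1 := by
            rw [div_le_iff₀ h0']; nlinarith
          linarith
    · show (0:ℝ) ≤ p.2; linarith
  · push_neg at h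
    rcases mem_entry_iff.1 hp with ⟨e1, e2, e3⟩ | ⟨e1, e2, e3⟩
    · apply pleq_of_le
      · show p.1 ≤ (0:ℝ); rw [e1]
      · show x.2 - σmax * x.1 ≤ p.2
        rw [e1] at hhi; simp only [sub_zero] at hhi; linarith
    · exfalso; nlinarith

lemma bminus_le {σmin σmax : ℝ} (h0 : 0 ≤ σmin) (h1 : σmin ≤ σmax) {x p : ℝ × ℝ}
    (hp : p ∈ entrySide) (hmem : x ∈ projCell σmin σmax p) : pleq (bminus σmin x) p := by
  obtain ⟨hx, hpx1, hpx2, hlo, hhi⟩ := hmem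
  obtain ⟨hx0, hx1, hy0, hy1⟩ := exit_coords hx
  obtain ⟨hp0, hp1, hq0, hq1⟩ := entry_coords hp
  unfold bminus; split_ifs with h
  · apply pleq_of_le
    · show (0:ℝ) ≤ p.1; linarith
    · show p.2 ≤ x.2 - σmin * x.1
      rcases mem_entry_iff.1 hp with ⟨e1, e2, e3⟩ | ⟨e1, e2, e3⟩
      · rw [e1] at hlo; simp only [sub_zero] at hlo; linarith
      · rw [e3]; linarith
  · push_neg at h
    have hσpos : 0 < σmin := by
      rcases h0.eq_or_lt with h0' | h0'
      · exfalso; rw [← h0'] at h; rw [zero_mul] at h; linarith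
      · exact h0'
    rcases mem_entry_iff.1 hp with ⟨e1, e2, e3⟩ | ⟨e1, e2, e3⟩
    · exfalso; rw [e1] at hlo; simp only [sub_zero] at hlo; linarith
    · apply pleq_of_le
      · show x.1 - x.2 / σmin ≤ p.1
        have hd : x.1 - p.1 ≤ x.2 / σmin := by
          rw [le_div_iff₀ hσpos]; nlinarith
        linarith
      · show p.2 ≤ (0:ℝ); rw [e3]

lemma bplus_mono {σ : ℝ} (hσ : 0 ≤ σ) {q x : ℝ × ℝ} (hq : q ∈ exitSide) (hx : x ∈ exitSide)
    (h : pleq q x) : pleq (bplus σ q) (bplus σ x) := by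
  obtain ⟨h1, h2⟩ := exit_mono hq hx h
  obtain ⟨ha0, ha1, hb0, hb1⟩ := exit_coords hq
  obtain ⟨hc0, hc1, hd0, hd1⟩ := exit_coords hx
  unfold bplus; split_ifs with hq' hx' hx'
  · apply pleq_of_le
    · show q.1 - q.2 / σ ≤ x.1 - x.2 / σ
      rcases hσ.eq_or_lt with h0' | h0'
      · rw [← h0', div_zero, div_zero]; linarith
      · have : x.2 / σ ≤ q.2 / σ := by
          gcongr
        linarith
    · show (0:ℝ) ≤ (0:ℝ); exact le_refl _
  · exfalso; push_neg at hx'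
    nlinarith [mul_le_mul_of_nonneg_left h1 hσ]
  · push_neg at hq'
    apply pleq_of_le
    · show (0:ℝ) ≤ x.1 - x.2 / σ
      rcases hσ.eq_or_lt with h0' | h0'
      · rw [← h0'] at hx'
        rw [zero_mul] at hx'
        have : x.2 = 0 := le_antisymm hx' hd0
        rw [this, zero_div]; linarith
      · have : x.2 / σ ≤ x.1 := by rw [div_le_iff₀ h0']; nlinarith
        linarith
    · show (0:ℝ) ≤ q.2 - σ * q.1; linarith
  · push_neg at hq' hx'
    apply pleq_of_le
    · show (0:ℝ) ≤ (0:ℝ); exact le_refl _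
    · show x.2 - σ * x.1 ≤ q.2 - σ * q.1
      nlinarith [mul_le_mul_of_nonneg_left h1 hσ]

lemma bminus_mono {σ : ℝ} (hσ : 0 ≤ σ) {q x : ℝ × ℝ} (hq : q ∈ exitSide) (hx : x ∈ exitSide)
    (h : pleq q x) : pleq (bminus σ q) (bminus σ x) := by
  obtain ⟨h1, h2⟩ := exit_mono hq hx h
  obtain ⟨ha0, ha1, hb0, hb1⟩ := exit_coords hq
  obtain ⟨hc0, hc1, hd0, hd1⟩ := exit_coords hx
  unfold bminus; split_ifs with hq' hx' hx'
  · apply pleq_of_le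
    · show (0:ℝ) ≤ (0:ℝ); exact le_refl _
    · show x.2 - σ * x.1 ≤ q.2 - σ * q.1
      nlinarith [mul_le_mul_of_nonneg_left h1 hσ]
  · push_neg at hx'
    have hσpos : 0 < σ := by
      rcases hσ.eq_or_lt with h0' | h0'
      · exfalso; rw [← h0'] at hx'; rw [zero_mul] at hx'; linarith
      · exact h0'
    apply pleq_of_le
    · show (0:ℝ) ≤ x.1 - x.2 / σ
      have : x.2 / σ ≤ x.1 := by rw [div_le_iff₀ hσpos]; nlinarith
      linarith
    · show (0:ℝ) ≤ q.2 - σ * q.1; linarith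
  · exfalso; push_neg at hq'
    nlinarith [mul_le_mul_of_nonneg_left h1 hσ]
  · push_neg at hq' hx'
    have hσpos : 0 < σ := by
      rcases hσ.eq_or_lt with h0' | h0'
      · exfalso; rw [← h0'] at hx'; rw [zero_mul] at hx'; linarith
      · exact h0'
    apply pleq_of_le
    · show q.1 - q.2 / σ ≤ x.1 - x.2 / σ
      have : x.2 / σ ≤ q.2 / σ := by gcongr
      linarith
    · show (0:ℝ) ≤ (0:ℝ); exact le_refl _

lemma between_mem {σmin σmax : ℝ} (h0 : 0 ≤ σmin) (h1 : σmin ≤ σmax) {x p : ℝ × ℝ}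
    (hx : x ∈ exitSide) (hp : p ∈ entrySide)
    (hm : pleq (bminus σmin x) p) (hpm : pleq p (bplus σmax x)) :
    x ∈ projCell σmin σmax p := by
  have hσ : 0 ≤ σmax := le_trans h0 h1
  obtain ⟨mE, m1, m2, me⟩ := bminus_props σmin h0 hx
  obtain ⟨ME, M1, M2, Me⟩ := bplus_props σmax hσ hx
  obtain ⟨a1, a2⟩ := entry_mono mE hp hm
  obtain ⟨b1, b2⟩ := entry_mono hp ME hpm
  refine ⟨hx, by linarith, by linarith, ?_, ?_⟩
  · have hh := mul_le_mul_of_nonneg_left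
      (show x.1 - p.1 ≤ x.1 - (bminus σmin x).1 by linarith) h0
    linarith
  · have hh := mul_le_mul_of_nonneg_left
      (show x.1 - (bplus σmax x).1 ≤ x.1 - p.1 by linarith) hσ
    linarith

lemma preconn_of_interval {X : Set (ℝ × ℝ)} (hXE : X ⊆ exitSide)
    (hX : ∀ q₁ ∈ X, ∀ q₂ ∈ X, ∀ x ∈ exitSide, pleq q₁ x → pleq x q₂ → x ∈ X) :
    IsPreconnected X := by
  set T := X ∩ (Icc (0:ℝ) 1 ×ˢ {(1:ℝ)}) with hTdef
  set R := X ∩ ({(1:ℝ)} ×ˢ Icc (0:ℝ) 1) with hRdef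
  have hXTR : X = T ∪ R := by
    ext z; constructor
    · intro hz
      rcases hXE hz with h | h
      · exact Or.inl ⟨hz, h⟩
      · exact Or.inr ⟨hz, h⟩
    · rintro (⟨h, _⟩ | ⟨h, _⟩) <;> exact h
  have hT : Convex ℝ T := by
    rintro a ⟨haX, ha⟩ b ⟨hbX, hb⟩ s t hs ht hst
    have ha2 : a.2 = 1 := ha.2
    have hb2 : b.2 = 1 := hb.2
    obtain ⟨ha0, ha1⟩ := mem_Icc.1 ha.1
    obtain ⟨hb0, hb1⟩ := mem_Icc.1 hb.1
    have hc1 : (s • a + t • b).1 = s * a.1 + t * b.1 := rfl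
    have hc2 : (s • a + t • b).2 = 1 := by
      show s * a.2 + t * b.2 = 1
      rw [ha2, hb2]; linarith
    have hcmem : s • a + t • b ∈ Icc (0:ℝ) 1 ×ˢ {(1:ℝ)} := by
      refine ⟨mem_Icc.2 ⟨?_, ?_⟩, hc2⟩ <;> rw [hc1] <;> nlinarith
    have hcE : s • a + t • b ∈ exitSide := Or.inl hcmem
    rcases le_total a.1 b.1 with hab | hab
    · refine ⟨hX a haX b hbX _ hcE ?_ ?_, hcmem⟩
      · exact pleq_of_le (by rw [hc1]; nlinarith) (by rw [hc2, ha2])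
      · exact pleq_of_le (by rw [hc1]; nlinarith) (by rw [hc2, hb2])
    · refine ⟨hX b hbX a haX _ hcE ?_ ?_, hcmem⟩
      · exact pleq_of_le (by rw [hc1]; nlinarith) (by rw [hc2, hb2])
      · exact pleq_of_le (by rw [hc1]; nlinarith) (by rw [hc2, ha2])
  have hR : Convex ℝ R := by
    rintro a ⟨haX, ha⟩ b ⟨hbX, hb⟩ s t hs ht hst
    have ha1 : a.1 = 1 := ha.1
    have hb1 : b.1 = 1 := hb.1
    obtain ⟨ha0, ha2⟩ := mem_Icc.1 ha.2
    obtain ⟨hb0, hb2⟩ := mem_Icc.1 hb.2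
    have hc2 : (s • a + t • b).2 = s * a.2 + t * b.2 := rfl
    have hc1 : (s • a + t • b).1 = 1 := by
      show s * a.1 + t * b.1 = 1
      rw [ha1, hb1]; linarith
    have hcmem : s • a + t • b ∈ ({(1:ℝ)} ×ˢ Icc (0:ℝ) 1) := by
      refine ⟨hc1, mem_Icc.2 ⟨?_, ?_⟩⟩ <;> rw [hc2] <;> nlinarith
    have hcE : s • a + t • b ∈ exitSide := Or.inr hcmem
    rcases le_total a.2 b.2 with hab | hab
    · refine ⟨hX b hbX a haX _ hcE ?_ ?_, hcmem⟩
      · exact pleq_of_le (by rw [hc1, hb1]) (by rw [hc2]; nlinarith)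
      · exact pleq_of_le (by rw [hc1, ha1]) (by rw [hc2]; nlinarith)
    · refine ⟨hX a haX b hbX _ hcE ?_ ?_, hcmem⟩
      · exact pleq_of_le (by rw [hc1, ha1]) (by rw [hc2]; nlinarith)
      · exact pleq_of_le (by rw [hc1, hb1]) (by rw [hc2]; nlinarith)
  rcases T.eq_empty_or_nonempty with hTe | ⟨t0, ht0⟩
  · rw [hXTR, hTe, empty_union]; exact hR.isPreconnected
  rcases R.eq_empty_or_nonempty with hRe | ⟨r0, hr0⟩
  · rw [hXTR, hRe, union_empty]; exact hT.isPreconnected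
  have hcornerE : ((1:ℝ), (1:ℝ)) ∈ exitSide :=
    Or.inl ⟨mem_Icc.2 ⟨zero_le_one, le_refl 1⟩, rfl⟩
  have hcorner : ((1:ℝ), (1:ℝ)) ∈ X := by
    apply hX t0 ht0.1 r0 hr0.1 _ hcornerE
    · exact pleq_of_le (mem_Icc.1 ht0.2.1).2 (show ((1:ℝ),(1:ℝ)).2 ≤ t0.2 from (show t0.2 = 1 from ht0.2.2).ge)
    · exact pleq_of_le (show ((1:ℝ),(1:ℝ)).1 ≤ r0.1 from (show r0.1 = 1 from hr0.2.1).ge) (mem_Icc.1 hr0.2.2).2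
  have hTc : ((1:ℝ), (1:ℝ)) ∈ T := ⟨hcorner, mem_Icc.2 ⟨zero_le_one, le_refl 1⟩, rfl⟩
  have hRc : ((1:ℝ), (1:ℝ)) ∈ R := ⟨hcorner, rfl, mem_Icc.2 ⟨zero_le_one, le_refl 1⟩⟩
  rw [hXTR]
  exact IsPreconnected.union _ hTc hRc hT.isPreconnected hR.isPreconnected


/-- the projection through a cell of a point `p` on the entry side is an
order-interval in the exit side's linear order (in particular connected), and the projection
of an interval `I` of the entry side is connected. -/
theorem proj_connected (σmin σmax : ℝ) (h0 : 0 ≤ σmin) (h1 : σmin ≤ σmax)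
    (p : ℝ × ℝ) (hp : p ∈ entrySide)
    (I : Set (ℝ × ℝ)) (hIE : I ⊆ entrySide)
    (hI : ∀ p₁ ∈ I, ∀ p₂ ∈ I, ∀ x ∈ entrySide, pleq p₁ x → pleq x p₂ → x ∈ I) :
    (∀ q₁ ∈ projCell σmin σmax p, ∀ q₂ ∈ projCell σmin σmax p,
      ∀ x ∈ exitSide, pleq q₁ x → pleq x q₂ → x ∈ projCell σmin σmax p) ∧
    IsPreconnected (projCell σmin σmax p) ∧
    IsPreconnected (projSet σmin σmax I) := by
  have hσ : 0 ≤ σmax := le_trans h0 h1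
  have part1 : ∀ q₁ ∈ projCell σmin σmax p, ∀ q₂ ∈ projCell σmin σmax p,
      ∀ x ∈ exitSide, pleq q₁ x → pleq x q₂ → x ∈ projCell σmin σmax p := by
    intro q₁ hq₁ q₂ hq₂ x hx hx1 hx2
    obtain ⟨hq₁E, a1, a2, a3, a4⟩ := hq₁
    obtain ⟨hq₂E, b1, b2, b3, b4⟩ := hq₂
    obtain ⟨c1, c2⟩ := exit_mono hq₁E hx hx1
    obtain ⟨d1, d2⟩ := exit_mono hx hq₂E hx2
    refine ⟨hx, by linarith, by linarith, ?_, ?_⟩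
    · have := mul_le_mul_of_nonneg_left (show x.1 - p.1 ≤ q₂.1 - p.1 by linarith) h0
      linarith
    · have := mul_le_mul_of_nonneg_left (show q₁.1 - p.1 ≤ x.1 - p.1 by linarith) hσ
      linarith
  refine ⟨part1, preconn_of_interval (fun q hq => hq.1) part1, ?_⟩
  apply preconn_of_interval
  · intro q hq
    simp only [projSet, mem_iUnion, exists_prop] at hq
    obtain ⟨p', _, hq'⟩ := hq
    exact hq'.1
  · intro q₁ hq₁ q₂ hq₂ x hx hx1 hx2
    simp only [projSet, mem_iUnion, exists_prop] at hq₁ hq₂ ⊢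
    obtain ⟨p₁, hp₁I, hq₁p⟩ := hq₁
    obtain ⟨p₂, hp₂I, hq₂p⟩ := hq₂
    have hq₁E : q₁ ∈ exitSide := hq₁p.1
    have hq₂E : q₂ ∈ exitSide := hq₂p.1
    have step1 : pleq p₁ (bplus σmax x) :=
      pleq_trans_s18 (le_bplus h0 h1 (hIE hp₁I) hq₁p) (bplus_mono hσ hq₁E hx hx1)
    have step2 : pleq (bminus σmin x) p₂ :=
      pleq_trans_s18 (bminus_mono h0 hx hq₂E hx2) (bminus_le h0 h1 (hIE hp₂I) hq₂p)
    obtain ⟨ME, M1, M2, Me⟩ := bplus_props σmax hσ hx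
    rcases pleq_total (bplus σmax x) p₂ with hc | hc
    · refine ⟨bplus σmax x, hI p₁ hp₁I p₂ hp₂I _ ME step1 hc, ?_⟩
      exact mem_of_props h1 (le_refl σmax) hx M1 M2 Me
    · exact ⟨p₂, hp₂I, between_mem h0 h1 hx (hIE hp₂I) step2 hc⟩
end
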